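/- arXiv:2102.06806 — 10 statements merged into one kernel-verified Lean document; each statement's English description precedes it below -/
import Mathlib

section
/- Let X ⊆ ℝⁿ be a compact convex set of diameter at most D, let f : ℝⁿ → ℝ be differentiable, m-strongly convex and L-smooth on X (0 < m ≤ L), and let x* be the minimizer of f over X. Suppose S ⊆ X is a finite nonempty set such that ⟨∇f(x*), s − x*⟩ = 0 for every s ∈ S. Then for every x ∈ X, the strong Wolfe gap satisfies w(x, S) ≤ L·D·‖x − x*‖ ≤ L·D·√(2(f(x) − f(x*))/m). -/
open Set
open scoped RealInnerProductSpace BigOperators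

/-- Let `X ⊆ ℝⁿ` be a compact convex set of diameter at most `D`, let
`f` be differentiable, `m`-strongly convex and `L`-smooth on `X` (`0 < m ≤ L`), and let
`xs` be the minimizer of `f` over `X`. If `S ⊆ X` is a finite nonempty set with
`⟪∇f(xs), s - xs⟫ = 0` for all `s ∈ S`, then for every `x ∈ X` the strong Wolfe gap
satisfies `w(x, S) ≤ L·D·‖x - xs‖ ≤ L·D·√(2(f x - f xs)/m)`. -/
theorem strong_wolfe_gap_le_of_optimal_face
    {n : ℕ} (X : Set (EuclideanSpace ℝ (Fin n)))
    (hXcompact : IsCompact X) (hXconvex : Convex ℝ X)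
    (D m L : ℝ) (hm : 0 < m) (hmL : m ≤ L)
    (hdiam : ∀ x ∈ X, ∀ y ∈ X, ‖x - y‖ ≤ D)
    (f : EuclideanSpace ℝ (Fin n) → ℝ) (f' : EuclideanSpace ℝ (Fin n) → EuclideanSpace ℝ (Fin n))
    (hgrad : ∀ x, HasGradientAt f (f' x) x)
    (hstrconv : ∀ x ∈ X, ∀ y ∈ X,
      f x + ⟪f' x, y - x⟫ + (m / 2) * ‖y - x‖ ^ 2 ≤ f y)
    (hsmooth : ∀ x ∈ X, ∀ y ∈ X, ‖f' x - f' y‖ ≤ L * ‖x - y‖)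
    (xs : EuclideanSpace ℝ (Fin n)) (hxsX : xs ∈ X) (hxsmin : ∀ y ∈ X, f xs ≤ f y)
    (S : Set (EuclideanSpace ℝ (Fin n))) (hSX : S ⊆ X)
    (hSfin : S.Finite) (hSne : S.Nonempty)
    (hSface : ∀ s ∈ S, ⟪f' xs, s - xs⟫ = 0)
    (x : EuclideanSpace ℝ (Fin n)) (hxX : x ∈ X) :
    sSup ((fun y => ⟪f' x, y⟫) '' S) - sInf ((fun z => ⟪f' x, z⟫) '' X)
        ≤ L * D * ‖x - xs‖ ∧
      L * D * ‖x - xs‖ ≤ L * D * Real.sqrt (2 * (f x - f xs) / m) := by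
  -- First-order optimality at xs
  have hopt : ∀ z ∈ X, 0 ≤ ⟪f' xs, z - xs⟫ := by
    intro z hz
    have hmin : IsLocalMinOn f X xs := (isMinOn_iff.mpr hxsmin).localize
    have hfd : HasFDerivWithinAt f ((InnerProductSpace.toDual ℝ _) (f' xs)) X xs :=
      (hgrad xs).hasFDerivAt.hasFDerivWithinAt
    have hcone : z - xs ∈ posTangentConeAt X xs :=
      sub_mem_posTangentConeAt_of_segment_subset (hXconvex.segment_subset hxsX hz)
    simpa using hmin.hasFDerivWithinAt_nonneg hfd hcone
  have hL : (0:ℝ) < L := lt_of_lt_of_le hm hmL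
  have hD : (0:ℝ) ≤ D := by simpa using hdiam x hxX x hxX
  -- key pointwise bound
  have hkey : ∀ y ∈ S, ∀ z ∈ X, ⟪f' x, y⟫ - ⟪f' x, z⟫ ≤ L * D * ‖x - xs‖ := by
    intro y hy z hz
    have h1 : ⟪f' x, y⟫ - ⟪f' x, z⟫ = ⟪f' x - f' xs, y - z⟫ + ⟪f' xs, y - xs⟫
        - ⟪f' xs, z - xs⟫ := by
      simp only [inner_sub_left, inner_sub_right]; ring
    rw [h1, hSface y hy]
    have h2 : ⟪f' x - f' xs, y - z⟫ ≤ ‖f' x - f' xs‖ * ‖y - z‖ :=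
      real_inner_le_norm _ _
    have h3 : ‖f' x - f' xs‖ ≤ L * ‖x - xs‖ := hsmooth x hxX xs hxsX
    have h4 : ‖y - z‖ ≤ D := hdiam y (hSX hy) z hz
    have h5 : ⟪f' x - f' xs, y - z⟫ ≤ (L * ‖x - xs‖) * D := by
      calc ⟪f' x - f' xs, y - z⟫ ≤ ‖f' x - f' xs‖ * ‖y - z‖ := h2
        _ ≤ (L * ‖x - xs‖) * D := by
            apply mul_le_mul h3 h4 (norm_nonneg _)
            positivity
    nlinarith [hopt z hz]
  constructor
  · -- sup/inf manipulations
    obtain ⟨s0, hs0⟩ := hSne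
    have hnex : ((fun z => ⟪f' x, z⟫) '' X).Nonempty := ⟨_, mem_image_of_mem _ hxsX⟩
    have hbdd : BddBelow ((fun z => ⟪f' x, z⟫) '' X) :=
      (hXcompact.image (Continuous.inner continuous_const continuous_id)).bddBelow
    rw [sub_le_iff_le_add]
    apply csSup_le (⟨_, mem_image_of_mem _ hs0⟩)
    rintro a ⟨y, hy, rfl⟩
    have hinf : (⟪f' x, y⟫ : ℝ) - L * D * ‖x - xs‖ ≤ sInf ((fun z => ⟪f' x, z⟫) '' X) := by
      apply le_csInf hnex
      rintro b ⟨z, hz, rfl⟩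
      have := hkey y hy z hz
      simp only
      linarith
    simp only at hinf ⊢
    linarith
  · -- second inequality
    have h6 : f xs + ⟪f' xs, x - xs⟫ + (m / 2) * ‖x - xs‖ ^ 2 ≤ f x :=
      hstrconv xs hxsX x hxX
    have h7 : ‖x - xs‖ ^ 2 ≤ 2 * (f x - f xs) / m := by
      rw [le_div_iff₀ hm]
      nlinarith [hopt x hxX]
    have h8 : ‖x - xs‖ ≤ Real.sqrt (2 * (f x - f xs) / m) := by
      rw [← Real.sqrt_sq (norm_nonneg (x - xs))]
      exact Real.sqrt_le_sqrt h7
    have : 0 ≤ L * D := by positivity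
    exact mul_le_mul_of_nonneg_left h8 this
end

section
/- Let X ⊆ ℝⁿ be a compact convex set, let f : ℝⁿ → ℝ be differentiable, m-strongly convex and L-smooth on X (0 < m ≤ L), let x* be the minimizer of f over X, and let τ > 0, D > 0. Suppose v, s ∈ X satisfy ⟨∇f(x*), v − x*⟩ = 0, ⟨∇f(x*), s − x*⟩ ≥ τ, and ‖s − v‖ ≤ D. Then for every x ∈ X with f(x) − f(x*) ≤ m·τ² / (8·L²·D²), it holds that ⟨∇f(x), s − v⟩ ≥ τ/2. -/
open Set
open scoped RealInnerProductSpace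

/-- Under strict complementarity (`⟪∇f(xs), v - xs⟫ = 0`,
`⟪∇f(xs), s - xs⟫ ≥ τ`, `‖s - v‖ ≤ D`), if the primal gap is at most
`m·τ²/(8·L²·D²)`, then `⟪∇f(x), s - v⟫ ≥ τ/2`. -/
theorem inner_sub_ge_half_tau_of_small_primal_gap
    {n : ℕ} (X : Set (EuclideanSpace ℝ (Fin n)))
    (hXcompact : IsCompact X) (hXconvex : Convex ℝ X)
    (m L : ℝ) (hm : 0 < m) (hmL : m ≤ L)
    (f : EuclideanSpace ℝ (Fin n) → ℝ) (f' : EuclideanSpace ℝ (Fin n) → EuclideanSpace ℝ (Fin n))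
    (hgrad : ∀ x, HasGradientAt f (f' x) x)
    (hstrconv : ∀ x ∈ X, ∀ y ∈ X,
      f x + ⟪f' x, y - x⟫ + (m / 2) * ‖y - x‖ ^ 2 ≤ f y)
    (hsmooth : ∀ x ∈ X, ∀ y ∈ X, ‖f' x - f' y‖ ≤ L * ‖x - y‖)
    (xs : EuclideanSpace ℝ (Fin n)) (hxsX : xs ∈ X) (hxsmin : ∀ y ∈ X, f xs ≤ f y)
    (τ D : ℝ) (hτ : 0 < τ) (hD : 0 < D)
    (v s : EuclideanSpace ℝ (Fin n)) (hvX : v ∈ X) (hsX : s ∈ X)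
    (hv : ⟪f' xs, v - xs⟫ = 0) (hs : τ ≤ ⟪f' xs, s - xs⟫) (hsv : ‖s - v‖ ≤ D)
    (x : EuclideanSpace ℝ (Fin n)) (hxX : x ∈ X)
    (hgap : f x - f xs ≤ m * τ ^ 2 / (8 * L ^ 2 * D ^ 2)) :
    τ / 2 ≤ ⟪f' x, s - v⟫ := by
  have hL : 0 < L := lt_of_lt_of_le hm hmL
  set d : ℝ := ‖x - xs‖ with hd
  have hdnn : 0 ≤ d := norm_nonneg _
  -- key perturbation estimate towards first-order optimality
  have hkey : ∀ t : ℝ, 0 < t → t ≤ 1 → -(L * t * d ^ 2) ≤ ⟪f' xs, x - xs⟫ := by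
    intro t ht ht1
    set z : EuclideanSpace ℝ (Fin n) := xs + t • (x - xs) with hzdef
    have hz : z ∈ X := by
      have := hXconvex hxsX hxX (by linarith : (0:ℝ) ≤ 1 - t) ht.le (by ring)
      convert this using 1
      rw [hzdef]
      module
    have h1 := hstrconv z hz xs hxsX
    have h2 := hxsmin z hz
    have hxz : xs - z = -(t • (x - xs)) := by rw [hzdef]; abel
    have hnormxz : ‖xs - z‖ = t * d := by
      rw [hxz, norm_neg, norm_smul, Real.norm_eq_abs, abs_of_pos ht]
    have hinnz : ⟪f' z, xs - z⟫ = -(t * ⟪f' z, x - xs⟫) := by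
      rw [hxz, inner_neg_right, real_inner_smul_right]
    rw [hnormxz, hinnz] at h1
    have hz1 : (m / 2) * t * d ^ 2 ≤ ⟪f' z, x - xs⟫ := by
      have h3 : t * ((m / 2) * t * d ^ 2) ≤ t * ⟪f' z, x - xs⟫ := by
        have heq : (m / 2) * (t * d) ^ 2 = t * ((m / 2) * t * d ^ 2) := by ring
        linarith [heq ▸ h1]
      exact le_of_mul_le_mul_left h3 ht
    -- smoothness transfer
    have hznorm : ‖z - xs‖ = t * d := by rw [norm_sub_rev, hnormxz]
    have hsm := hsmooth z hz xs hxsX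
    rw [hznorm] at hsm
    have hcs : ⟪f' z - f' xs, x - xs⟫ ≤ ‖f' z - f' xs‖ * d := real_inner_le_norm _ _
    have hub : ⟪f' z - f' xs, x - xs⟫ ≤ L * (t * d) * d :=
      le_trans hcs (mul_le_mul_of_nonneg_right hsm hdnn)
    have hsplit : ⟪f' xs, x - xs⟫ = ⟪f' z, x - xs⟫ - ⟪f' z - f' xs, x - xs⟫ := by
      rw [inner_sub_left]; ring
    have hmt : 0 ≤ (m / 2) * t * d ^ 2 := by positivity
    have heq2 : L * (t * d) * d = L * t * d ^ 2 := by ring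
    rw [hsplit]
    linarith [heq2 ▸ hub]
  -- first-order optimality
  have hopt : 0 ≤ ⟪f' xs, x - xs⟫ := by
    by_contra hneg
    push_neg at hneg
    rcases eq_or_lt_of_le hdnn with hd0 | hdpos
    · have hx0 : x - xs = 0 := norm_eq_zero.mp hd0.symm
      rw [hx0, inner_zero_right] at hneg
      exact absurd hneg (lt_irrefl 0)
    · set g : ℝ := ⟪f' xs, x - xs⟫ with hg
      have hLd : 0 < L * d ^ 2 := by positivity
      set t : ℝ := min 1 (-g / (2 * (L * d ^ 2))) with htdef
      have htpos : 0 < t := lt_min one_pos (div_pos (by linarith) (by positivity))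
      have ht1 : t ≤ 1 := min_le_left _ _
      have hk := hkey t htpos ht1
      have ht2 : t ≤ -g / (2 * (L * d ^ 2)) := min_le_right _ _
      have hbd : L * t * d ^ 2 ≤ -g / 2 := by
        rw [le_div_iff₀ (by positivity : (0:ℝ) < 2 * (L * d ^ 2))] at ht2
        nlinarith
      linarith
  -- bound on d
  have hdbound : d ^ 2 * (4 * L ^ 2 * D ^ 2) ≤ τ ^ 2 := by
    have h1 := hstrconv xs hxsX x hxX
    rw [← hd] at h1
    have hA : (m / 2) * d ^ 2 ≤ m * τ ^ 2 / (8 * L ^ 2 * D ^ 2) := by linarith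
    rw [le_div_iff₀ (by positivity : (0:ℝ) < 8 * L ^ 2 * D ^ 2)] at hA
    nlinarith [hA, hm]
  have hLdD : L * d * D ≤ τ / 2 := by
    nlinarith [hdbound, mul_nonneg (mul_nonneg hL.le hdnn) hD.le, hτ.le]
  -- final chain
  have hsv2 : τ ≤ ⟪f' xs, s - v⟫ := by
    have heq : ⟪f' xs, s - v⟫ = ⟪f' xs, s - xs⟫ - ⟪f' xs, v - xs⟫ := by
      rw [← inner_sub_right]
      congr 1
      abel
    rw [heq, hv]
    linarith
  have hsm := hsmooth xs hxsX x hxX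
  have hxsx : ‖xs - x‖ = d := by rw [hd, norm_sub_rev]
  rw [hxsx] at hsm
  have hcs : ⟪f' xs - f' x, s - v⟫ ≤ ‖f' xs - f' x‖ * ‖s - v‖ := real_inner_le_norm _ _
  have hub : ⟪f' xs - f' x, s - v⟫ ≤ L * d * D :=
    le_trans hcs (mul_le_mul hsm hsv (norm_nonneg _) (by positivity))
  have hsplit : ⟪f' x, s - v⟫ = ⟪f' xs, s - v⟫ - ⟪f' xs - f' x, s - v⟫ := by
    rw [inner_sub_left]; ring
  rw [hsplit]
  linarith
end

section
/- Let X ⊆ ℝⁿ be a compact convex set of diameter at most D, let f : ℝⁿ → ℝ be differentiable, m-strongly convex and L-smooth on X (0 < m ≤ L), let x* be the minimizer of f over X, and let τ > 0. Suppose s ∈ X satisfies ⟨∇f(x*), s − x*⟩ ≥ τ. Then for every x ∈ X with f(x) − f(x*) ≤ min{ τ² / (8·L·D²·(√(L/m) + 1)²), L·D²/2 }, it holds that ⟨∇f(x), s − x⟩ ≥ τ/2 and max_{v ∈ X} ⟨∇f(x), x − v⟩ ≤ τ/2; in particular ⟨∇f(x), s − x⟩ ≥ max_{v ∈ X} ⟨∇f(x),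 x − v⟩, i.e., the away gap at s dominates the Frank–Wolfe gap. -/
open Set
open scoped RealInnerProductSpace

private lemma key_scalar_ineq (D m L h κ r τ : ℝ) (hm : 0 < m) (hL : 0 < L)
    (hD : 0 < D) (hh0 : 0 ≤ h) (hr0 : 0 ≤ r) (hκ1 : 1 ≤ κ) (hκm : κ ^ 2 * m = L)
    (hmr : m * r ^ 2 ≤ 2 * h) (hgap2 : h ≤ L * D ^ 2 / 2)
    (hgap1 : h * (8 * L * D ^ 2 * (κ + 1) ^ 2) ≤ τ ^ 2) (hτ : 0 < τ) :
    L * D * r + h ≤ τ / 2 := by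
  have hκ0 : (0:ℝ) ≤ κ := by linarith
  have ha2 : (L * D * r) ^ 2 ≤ 2 * h * L * D ^ 2 * κ ^ 2 := by
    have e : (L * D * r) ^ 2 = κ ^ 2 * L * D ^ 2 * (m * r ^ 2) := by rw [← hκm]; ring
    have h2 := mul_le_mul_of_nonneg_left hmr (show (0:ℝ) ≤ κ ^ 2 * L * D ^ 2 by positivity)
    nlinarith
  have hb2 : h ^ 2 ≤ h * (L * D ^ 2) / 2 := by nlinarith
  have hcross : L * D * r * h ≤ h * L * D ^ 2 * κ := by
    nlinarith [sq_nonneg (L * D * r - 2 * κ * h), sq_nonneg h]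
  have hsum : (L * D * r + h) ^ 2 ≤ 2 * h * L * D ^ 2 * (κ + 1) ^ 2 := by nlinarith
  have hτ2 : 2 * h * L * D ^ 2 * (κ + 1) ^ 2 ≤ (τ / 2) ^ 2 := by nlinarith
  nlinarith [sq_nonneg (L * D * r + h - τ / 2), sq_nonneg (L * D * r + h + τ / 2)]

/-- If `s ∈ X` with `⟪∇f(xs), s - xs⟫ ≥ τ` (strict complementarity:
`s` is outside the optimal face) and the primal gap at `x ∈ X` is at most
`min (τ²/(8·L·D²·(√(L/m)+1)²)) (L·D²/2)`, then the away gap at `s` is at least `τ/2`,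
the Frank–Wolfe gap is at most `τ/2`, and in particular the away gap dominates the
Frank–Wolfe gap. -/
theorem away_gap_dominates_fw_gap_of_small_primal_gap
    {n : ℕ} (X : Set (EuclideanSpace ℝ (Fin n)))
    (hXcompact : IsCompact X) (hXconvex : Convex ℝ X)
    (D m L : ℝ) (hm : 0 < m) (hmL : m ≤ L)
    (hdiam : ∀ x ∈ X, ∀ y ∈ X, ‖x - y‖ ≤ D)
    (f : EuclideanSpace ℝ (Fin n) → ℝ) (f' : EuclideanSpace ℝ (Fin n) → EuclideanSpace ℝ (Fin n))
    (hgrad : ∀ x, HasGradientAt f (f' x) x)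
    (hstrconv : ∀ x ∈ X, ∀ y ∈ X,
      f x + ⟪f' x, y - x⟫ + (m / 2) * ‖y - x‖ ^ 2 ≤ f y)
    (hsmooth : ∀ x ∈ X, ∀ y ∈ X, ‖f' x - f' y‖ ≤ L * ‖x - y‖)
    (xs : EuclideanSpace ℝ (Fin n)) (hxsX : xs ∈ X) (hxsmin : ∀ y ∈ X, f xs ≤ f y)
    (τ : ℝ) (hτ : 0 < τ)
    (s : EuclideanSpace ℝ (Fin n)) (hsX : s ∈ X) (hs : τ ≤ ⟪f' xs, s - xs⟫)
    (x : EuclideanSpace ℝ (Fin n)) (hxX : x ∈ X)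
    (hgap : f x - f xs ≤
      min (τ ^ 2 / (8 * L * D ^ 2 * (Real.sqrt (L / m) + 1) ^ 2)) (L * D ^ 2 / 2)) :
    τ / 2 ≤ ⟪f' x, s - x⟫ ∧ (∀ v ∈ X, ⟪f' x, x - v⟫ ≤ τ / 2) ∧
      ∀ v ∈ X, ⟪f' x, x - v⟫ ≤ ⟪f' x, s - x⟫ := by
  have hL : 0 < L := hm.trans_le hmL
  -- D is nonnegative, in fact positive
  have hD0 : 0 ≤ D := by
    have := hdiam x hxX x hxX
    simpa using this
  have hD : 0 < D := by
    rcases hD0.lt_or_eq with h | h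
    · exact h
    · exfalso
      have h1 : ‖s - xs‖ ≤ D := hdiam s hsX xs hxsX
      have h2 : s - xs = 0 := by
        have : ‖s - xs‖ ≤ 0 := by linarith
        simpa using le_antisymm this (norm_nonneg _)
      rw [h2, inner_zero_right] at hs
      linarith
  -- first-order optimality at xs
  have opt : ∀ v ∈ X, 0 ≤ ⟪f' xs, v - xs⟫ := by
    intro v hv
    by_contra hA
    push_neg at hA
    set A := ⟪f' xs, v - xs⟫ with hAdef
    set r : ℝ := ‖v - xs‖ with hrdef
    have hr : 0 < r := by
      rcases (norm_nonneg (v - xs)).lt_or_eq with h | h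
      · exact h
      · exfalso
        have : v - xs = 0 := by simpa using le_antisymm h.symm.le (norm_nonneg _)
        rw [hAdef, this, inner_zero_right] at hA
        linarith
    have hc : 0 < L * r ^ 2 := by positivity
    set t : ℝ := min 1 (-A / (2 * (L * r ^ 2))) with htdef
    have ht0 : 0 < t := by
      apply lt_min one_pos
      apply div_pos (by linarith) (by positivity)
    have ht1 : t ≤ 1 := min_le_left _ _
    have htle : t * (L * r ^ 2) ≤ -A / 2 := by
      have : t ≤ -A / (2 * (L * r ^ 2)) := min_le_right _ _
      calc t * (L * r ^ 2) ≤ (-A / (2 * (L * r ^ 2))) * (L * r ^ 2) := by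
            exact mul_le_mul_of_nonneg_right this hc.le
        _ = -A / 2 := by field_simp
    set y := xs + t • (v - xs) with hydef
    have hyX : y ∈ X := by
      have := hXconvex hxsX hv (by linarith : (0:ℝ) ≤ 1 - t) ht0.le (by ring)
      convert this using 1
      rw [hydef]
      module
    have hxy : xs - y = (-t) • (v - xs) := by rw [hydef]; module
    have hnxy : ‖xs - y‖ = t * r := by
      rw [hxy, norm_smul]
      simp [abs_of_pos ht0, hrdef]
    -- strong convexity at y towards xs, plus minimality
    have h1 := hstrconv y hyX xs hxsX
    have h2 := hxsmin y hyX
    have h3 : ⟪f' y, xs - y⟫ ≤ -(m / 2) * ‖xs - y‖ ^ 2 := by linarith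
    have h4 : ⟪f' y, xs - y⟫ = -t * ⟪f' y, v - xs⟫ := by
      rw [hxy, real_inner_smul_right]
    have h5 : 0 ≤ ⟪f' y, v - xs⟫ := by
      rw [h4] at h3
      nlinarith [sq_nonneg ‖xs - y‖, norm_nonneg (xs - y)]
    -- compare gradients at xs and y
    have h6 : ‖f' xs - f' y‖ ≤ L * (t * r) := by
      have := hsmooth xs hxsX y hyX
      rwa [hnxy] at this
    have h7 : ⟪f' xs - f' y, v - xs⟫ ≥ -(L * (t * r) * r) := by
      have hcs : |⟪f' xs - f' y, v - xs⟫| ≤ ‖f' xs - f' y‖ * ‖v - xs‖ :=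
        abs_real_inner_le_norm _ _
      have h8 : ‖f' xs - f' y‖ * ‖v - xs‖ ≤ L * (t * r) * r :=
        mul_le_mul_of_nonneg_right h6 (norm_nonneg _)
      have := (abs_le.mp (hcs.trans h8)).1
      linarith
    have h9 : A = ⟪f' y, v - xs⟫ + ⟪f' xs - f' y, v - xs⟫ := by
      rw [hAdef, inner_sub_left]; ring
    have h10 : A ≥ -(t * (L * r ^ 2)) := by
      rw [h9]
      nlinarith
    linarith
  -- key quantities
  set h : ℝ := f x - f xs with hhdef
  have hh0 : 0 ≤ h := by have := hxsmin x hxX; linarith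
  set κ : ℝ := Real.sqrt (L / m) with hκdef
  have hκ0 : 0 ≤ κ := Real.sqrt_nonneg _
  have hκ2 : κ ^ 2 = L / m := Real.sq_sqrt (by positivity)
  have hκm : κ ^ 2 * m = L := by rw [hκ2]; field_simp
  have hκ1 : 1 ≤ κ := by
    have h1 : (1:ℝ) ≤ L / m := (one_le_div hm).mpr hmL
    calc (1:ℝ) = Real.sqrt 1 := Real.sqrt_one.symm
      _ ≤ κ := Real.sqrt_le_sqrt h1
  have hgap1 : h * (8 * L * D ^ 2 * (κ + 1) ^ 2) ≤ τ ^ 2 := by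
    have hden : 0 < 8 * L * D ^ 2 * (κ + 1) ^ 2 := by positivity
    have := hgap.trans_eq rfl
    have h1 : h ≤ τ ^ 2 / (8 * L * D ^ 2 * (κ + 1) ^ 2) := (le_min_iff.mp hgap).1
    exact (le_div_iff₀ hden).mp h1
  have hgap2 : h ≤ L * D ^ 2 / 2 := (le_min_iff.mp hgap).2
  set r : ℝ := ‖x - xs‖ with hrdef
  have hr0 : 0 ≤ r := norm_nonneg _
  have hrD : r ≤ D := hdiam x hxX xs hxsX
  -- strong convexity at xs plus optimality: m r² ≤ 2h
  have hmr : m * r ^ 2 ≤ 2 * h := by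
    have h1 := hstrconv xs hxsX x hxX
    have h2 := opt x hxX
    linarith
  -- the key scalar estimate: L·D·r + h ≤ τ/2
  have hkey : L * D * r + h ≤ τ / 2 :=
    key_scalar_ineq D m L h κ r τ hm hL hD hh0 hr0 hκ1 hκm hmr hgap2 hgap1 hτ
  -- gradient difference bound
  have hgd : ‖f' x - f' xs‖ ≤ L * r := hsmooth x hxX xs hxsX
  have hcs : ∀ w : EuclideanSpace ℝ (Fin n), ‖w‖ ≤ D →
      |⟪f' x - f' xs, w⟫| ≤ L * r * D := by
    intro w hw
    calc |⟪f' x - f' xs, w⟫| ≤ ‖f' x - f' xs‖ * ‖w‖ := abs_real_inner_le_norm _ _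
      _ ≤ (L * r) * D := by
          apply mul_le_mul hgd hw (norm_nonneg _)
          positivity
  have hconvx : ⟪f' xs, x - xs⟫ ≤ h := by
    have h1 := hstrconv xs hxsX x hxX
    have h2 : 0 ≤ m / 2 * ‖x - xs‖ ^ 2 := by positivity
    linarith
  have hoptx : 0 ≤ ⟪f' xs, x - xs⟫ := opt x hxX
  -- away gap lower bound
  have haway : τ / 2 ≤ ⟪f' x, s - x⟫ := by
    have hid : ⟪f' x, s - x⟫
        = ⟪f' xs, s - xs⟫ - ⟪f' xs, x - xs⟫ + ⟪f' x - f' xs, s - x⟫ := by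
      simp only [inner_sub_left, inner_sub_right]
      ring
    have hsx : ‖s - x‖ ≤ D := hdiam s hsX x hxX
    have h1 := (abs_le.mp (hcs (s - x) hsx)).1
    rw [hid]
    linarith
  refine ⟨haway, ?_, ?_⟩
  · intro v hv
    have hid : ⟪f' x, x - v⟫
        = ⟪f' x - f' xs, x - v⟫ + ⟪f' xs, x - xs⟫ - ⟪f' xs, v - xs⟫ := by
      simp only [inner_sub_left, inner_sub_right]
      ring
    have hxv : ‖x - v‖ ≤ D := hdiam x hxX v hv
    have h1 := (abs_le.mp (hcs (x - v) hxv)).2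
    have h2 := opt v hv
    rw [hid]
    linarith
  · intro v hv
    have hid : ⟪f' x, x - v⟫
        = ⟪f' x - f' xs, x - v⟫ + ⟪f' xs, x - xs⟫ - ⟪f' xs, v - xs⟫ := by
      simp only [inner_sub_left, inner_sub_right]
      ring
    have hxv : ‖x - v‖ ≤ D := hdiam x hxX v hv
    have h1 := (abs_le.mp (hcs (x - v) hxv)).2
    have h2 := opt v hv
    have : ⟪f' x, x - v⟫ ≤ τ / 2 := by rw [hid]; linarith
    linarith
end

section
/- Let X ⊆ ℝⁿ be a compact convex set, let f : ℝⁿ → ℝ be differentiable, m-strongly convex and L-smooth on X (0 < m ≤ L), let x* be the minimizer of f over X, and let τ > 0, D > 0. Suppose s, x, y ∈ X satisfy ⟨∇f(x*), s − x*⟩ ≥ τ, ‖s − x‖ ≤ D, f(y) ≤ f(x), f(x) − f(x*) < τ/2, and f(x) − f(x*) < m·τ² / (8·L²·D²). Then ⟨∇f(y), s − x⟩ > 0. -/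
open Set
open scoped RealInnerProductSpace

set_option maxHeartbeats 1000000 in
/-- If `s ∈ X` satisfies `⟪∇f(xs), s - xs⟫ ≥ τ` (strict complementarity:
`s` is outside the optimal face), `‖s - x‖ ≤ D`, `f y ≤ f x`, and the primal gap at `x`
is smaller than both `τ/2` and `m·τ²/(8·L²·D²)`, then `⟪∇f(y), s - x⟫ > 0`; hence a line
search for an away step from `s` takes the maximal step size. -/
theorem away_step_drops_vertex
    {n : ℕ} (X : Set (EuclideanSpace ℝ (Fin n)))
    (hXcompact : IsCompact X) (hXconvex : Convex ℝ X)
    (m L : ℝ) (hm : 0 < m) (hmL : m ≤ L)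
    (f : EuclideanSpace ℝ (Fin n) → ℝ) (f' : EuclideanSpace ℝ (Fin n) → EuclideanSpace ℝ (Fin n))
    (hgrad : ∀ x, HasGradientAt f (f' x) x)
    (hstrconv : ∀ x ∈ X, ∀ y ∈ X,
      f x + ⟪f' x, y - x⟫ + (m / 2) * ‖y - x‖ ^ 2 ≤ f y)
    (hsmooth : ∀ x ∈ X, ∀ y ∈ X, ‖f' x - f' y‖ ≤ L * ‖x - y‖)
    (xs : EuclideanSpace ℝ (Fin n)) (hxsX : xs ∈ X) (hxsmin : ∀ z ∈ X, f xs ≤ f z)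
    (τ D : ℝ) (hτ : 0 < τ) (hD : 0 < D)
    (s x y : EuclideanSpace ℝ (Fin n)) (hsX : s ∈ X) (hxX : x ∈ X) (hyX : y ∈ X)
    (hs : τ ≤ ⟪f' xs, s - xs⟫) (hsx : ‖s - x‖ ≤ D) (hfy : f y ≤ f x)
    (hgap1 : f x - f xs < τ / 2)
    (hgap2 : f x - f xs < m * τ ^ 2 / (8 * L ^ 2 * D ^ 2)) :
    0 < ⟪f' y, s - x⟫ := by
  have hL : 0 < L := lt_of_lt_of_le hm hmL
  -- First-order optimality at xs: ⟪f' xs, z - xs⟫ ≥ 0 for z ∈ X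
  have hopt : ∀ z ∈ X, (0:ℝ) ≤ ⟪f' xs, z - xs⟫ := by
    intro z hzX
    set d := z - xs with hd
    by_contra hneg
    push_neg at hneg
    set ε : ℝ := -⟪f' xs, d⟫ with hε
    have hεpos : 0 < ε := by rw [hε]; linarith
    set t : ℝ := min 1 (ε / (L * ‖d‖ ^ 2 + 1)) with ht
    have hden : 0 < L * ‖d‖ ^ 2 + 1 := by positivity
    have htpos : 0 < t := lt_min one_pos (div_pos hεpos hden)
    have htle : t ≤ 1 := min_le_left _ _
    set zt : EuclideanSpace ℝ (Fin n) := xs + t • d with hzt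
    have hztX : zt ∈ X := by
      have : zt = (1 - t) • xs + t • z := by
        simp only [hzt, hd]
        module
      rw [this]
      exact hXconvex hxsX hzX (by linarith) (le_of_lt htpos) (by ring)
    -- strong convexity at zt towards xs, plus minimality of xs
    have hsc := hstrconv zt hztX xs hxsX
    have hmin := hxsmin zt hztX
    have hxzt : xs - zt = -(t • d) := by simp only [hzt]; abel
    have hinner1 : ⟪f' zt, xs - zt⟫ = -(t * ⟪f' zt, d⟫) := by
      rw [hxzt, inner_neg_right, real_inner_smul_right]
    have hq : (0:ℝ) ≤ (m / 2) * ‖xs - zt‖ ^ 2 := by positivity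
    have h1 : 0 ≤ t * ⟪f' zt, d⟫ := by
      rw [hinner1] at hsc; linarith
    have h2 : 0 ≤ ⟪f' zt, d⟫ := nonneg_of_mul_nonneg_right h1 htpos
    -- compare gradients
    have h3 : ‖f' zt - f' xs‖ ≤ L * (t * ‖d‖) := by
      have := hsmooth zt hztX xs hxsX
      have hn : ‖zt - xs‖ = t * ‖d‖ := by
        simp [hzt, norm_smul, abs_of_pos htpos]
      rwa [hn] at this
    have h4 : |⟪f' zt - f' xs, d⟫| ≤ ‖f' zt - f' xs‖ * ‖d‖ :=
      abs_real_inner_le_norm _ _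
    have h5 : ⟪f' xs, d⟫ ≥ ⟪f' zt, d⟫ - L * t * ‖d‖ ^ 2 := by
      have h6 : ⟪f' zt, d⟫ - ⟪f' xs, d⟫ = ⟪f' zt - f' xs, d⟫ := by
        rw [inner_sub_left]
      have h7 : ⟪f' zt - f' xs, d⟫ ≤ L * (t * ‖d‖) * ‖d‖ :=
        le_trans (le_abs_self _) (le_trans h4
          (mul_le_mul_of_nonneg_right h3 (norm_nonneg _)))
      nlinarith [h7, h6]
    have h8 : L * t * ‖d‖ ^ 2 < ε := by
      have ht2 : t ≤ ε / (L * ‖d‖ ^ 2 + 1) := min_le_right _ _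
      have hte : t * (L * ‖d‖ ^ 2 + 1) ≤ ε := (le_div_iff₀ hden).mp ht2
      nlinarith [htpos]
    have hfin : ⟪f' xs, d⟫ > -ε := by linarith
    rw [hε] at hfin
    linarith
  -- strong convexity bounds
  have hscx := hstrconv xs hxsX x hxX
  have h1 : ⟪f' xs, x - xs⟫ ≤ f x - f xs := by
    have : (0:ℝ) ≤ (m / 2) * ‖x - xs‖ ^ 2 := by positivity
    linarith
  have hscy := hstrconv xs hxsX y hyX
  have h3 : m * ‖y - xs‖ ^ 2 ≤ 2 * (f x - f xs) := by
    have := hopt y hyX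
    linarith
  -- bound on the gradient difference term
  have hsm := hsmooth y hyX xs hxsX
  have h4 : |⟪f' y - f' xs, s - x⟫| ≤ L * ‖y - xs‖ * D := by
    calc |⟪f' y - f' xs, s - x⟫| ≤ ‖f' y - f' xs‖ * ‖s - x‖ :=
          abs_real_inner_le_norm _ _
      _ ≤ (L * ‖y - xs‖) * D := by
          apply mul_le_mul hsm hsx (norm_nonneg _)
          positivity
      _ = L * ‖y - xs‖ * D := by ring
  have h5 : L * ‖y - xs‖ * D < τ / 2 := by
    have hyn : (0:ℝ) ≤ ‖y - xs‖ := norm_nonneg _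
    have g8 : (f x - f xs) * (8 * L ^ 2 * D ^ 2) < m * τ ^ 2 :=
      (lt_div_iff₀ (by positivity)).mp hgap2
    have hmul : (4 * L ^ 2 * D ^ 2) * (m * ‖y - xs‖ ^ 2) ≤
        (4 * L ^ 2 * D ^ 2) * (2 * (f x - f xs)) :=
      mul_le_mul_of_nonneg_left h3 (by positivity)
    have e : m * (4 * L ^ 2 * D ^ 2 * ‖y - xs‖ ^ 2) < m * τ ^ 2 := by nlinarith
    have e2 : 4 * L ^ 2 * D ^ 2 * ‖y - xs‖ ^ 2 < τ ^ 2 :=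
      lt_of_mul_lt_mul_left e hm.le
    nlinarith [e2, mul_nonneg (mul_nonneg hL.le hyn) hD.le, hτ,
      sq_nonneg (τ - 2 * (L * ‖y - xs‖ * D))]
  -- decomposition
  have hdec : ⟪f' y, s - x⟫ =
      ⟪f' xs, s - xs⟫ - ⟪f' xs, x - xs⟫ + ⟪f' y - f' xs, s - x⟫ := by
    simp only [inner_sub_left, inner_sub_right]
    ring
  have h6 : -(L * ‖y - xs‖ * D) ≤ ⟪f' y - f' xs, s - x⟫ := neg_le_of_abs_le h4
  rw [hdec]
  linarith
end

section
/- Let X ⊆ ℝⁿ be a compact convex set, let f : ℝⁿ → ℝ be differentiable, m-strongly convex and L-smooth on X (0 < m ≤ L), let x* be the minimizer of f over X, and let τ > 0, D > 0. Suppose s, v ∈ X satisfy ⟨∇f(x*), s − x*⟩ ≥ τ, ⟨∇f(x*), v − x*⟩ = 0, and ‖s − v‖ ≤ D. Then for every y ∈ X with f(y) − f(x*) < m·τ² / (2·L²·D²), it holds that ⟨∇f(y), s − v⟩ > 0. -/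
open Set
open scoped RealInnerProductSpace

/-- Under strict complementarity (`⟪∇f(xs), s - xs⟫ ≥ τ` and
`⟪∇f(xs), v - xs⟫ = 0`) with `‖s - v‖ ≤ D`, every `y ∈ X` with primal gap smaller than
`m·τ²/(2·L²·D²)` satisfies `⟪∇f(y), s - v⟫ > 0`; hence the pairwise direction `v - s`
drops the vertex `s` via a maximal line-search step. -/
theorem pairwise_step_drops_vertex
    {n : ℕ} (X : Set (EuclideanSpace ℝ (Fin n)))
    (hXcompact : IsCompact X) (hXconvex : Convex ℝ X)
    (m L : ℝ) (hm : 0 < m) (hmL : m ≤ L)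
    (f : EuclideanSpace ℝ (Fin n) → ℝ) (f' : EuclideanSpace ℝ (Fin n) → EuclideanSpace ℝ (Fin n))
    (hgrad : ∀ x, HasGradientAt f (f' x) x)
    (hstrconv : ∀ x ∈ X, ∀ y ∈ X,
      f x + ⟪f' x, y - x⟫ + (m / 2) * ‖y - x‖ ^ 2 ≤ f y)
    (hsmooth : ∀ x ∈ X, ∀ y ∈ X, ‖f' x - f' y‖ ≤ L * ‖x - y‖)
    (xs : EuclideanSpace ℝ (Fin n)) (hxsX : xs ∈ X) (hxsmin : ∀ z ∈ X, f xs ≤ f z)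
    (τ D : ℝ) (hτ : 0 < τ) (hD : 0 < D)
    (s v : EuclideanSpace ℝ (Fin n)) (hsX : s ∈ X) (hvX : v ∈ X)
    (hs : τ ≤ ⟪f' xs, s - xs⟫) (hv : ⟪f' xs, v - xs⟫ = 0) (hsv : ‖s - v‖ ≤ D)
    (y : EuclideanSpace ℝ (Fin n)) (hyX : y ∈ X)
    (hgap : f y - f xs < m * τ ^ 2 / (2 * L ^ 2 * D ^ 2)) :
    0 < ⟪f' y, s - v⟫ := by
  have hL : 0 < L := hm.trans_le hmL
  -- first-order optimality: ⟪f' xs, y - xs⟫ ≥ 0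
  have hopt : 0 ≤ ⟪f' xs, y - xs⟫ := by
    have hseg : segment ℝ xs y ⊆ X := hXconvex.segment_subset hxsX hyX
    have hmin : IsLocalMinOn f X xs :=
      (isMinOn_iff.mpr fun z hz => hxsmin z hz).localize
    have := hmin.hasFDerivWithinAt_nonneg
      ((hgrad xs).hasFDerivAt.hasFDerivWithinAt)
      (sub_mem_posTangentConeAt_of_segment_subset hseg)
    simpa [InnerProductSpace.toDual_apply_apply, real_inner_comm] using this
  -- strong convexity bound on ‖y - xs‖
  have h1 := hstrconv xs hxsX y hyX
  have hn2 : m * ‖y - xs‖ ^ 2 ≤ 2 * (f y - f xs) := by nlinarith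
  have hnn : 0 ≤ ‖y - xs‖ := norm_nonneg _
  have hlt : L * ‖y - xs‖ * D < τ := by
    have h2 : (0:ℝ) < 2 * L ^ 2 * D ^ 2 := by positivity
    have hgap' : (f y - f xs) * (2 * L ^ 2 * D ^ 2) < m * τ ^ 2 :=
      (lt_div_iff₀ h2).mp hgap
    have hmul := mul_le_mul_of_nonneg_right hn2 (show (0:ℝ) ≤ L ^ 2 * D ^ 2 by positivity)
    have key : m * (L * ‖y - xs‖ * D) ^ 2 < m * τ ^ 2 := by nlinarith
    have key2 : (L * ‖y - xs‖ * D) ^ 2 < τ ^ 2 := lt_of_mul_lt_mul_left key hm.le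
    nlinarith [mul_nonneg (mul_nonneg hL.le hnn) hD.le]
  -- smoothness bound
  have hsm : ‖f' xs - f' y‖ ≤ L * ‖xs - y‖ := hsmooth xs hxsX y hyX
  have hxy : ‖xs - y‖ = ‖y - xs‖ := norm_sub_rev _ _
  have hCS : ⟪f' xs - f' y, s - v⟫ ≤ ‖f' xs - f' y‖ * ‖s - v‖ := real_inner_le_norm _ _
  have hprod : ‖f' xs - f' y‖ * ‖s - v‖ ≤ L * ‖y - xs‖ * D := by
    have h0 : 0 ≤ ‖f' xs - f' y‖ := norm_nonneg _
    have h1 : ‖f' xs - f' y‖ ≤ L * ‖y - xs‖ := by rwa [hxy] at hsm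
    nlinarith [norm_nonneg (s - v)]
  -- base inner product bound
  have hbase : τ ≤ ⟪f' xs, s - v⟫ := by
    have : (s : EuclideanSpace ℝ (Fin n)) - v = (s - xs) - (v - xs) := by abel
    rw [this, inner_sub_right, hv]
    linarith
  have hsplit : ⟪f' y, s - v⟫ = ⟪f' xs, s - v⟫ - ⟪f' xs - f' y, s - v⟫ := by
    rw [inner_sub_left]; ring
  linarith
end

section
/- Let X ⊆ ℝⁿ be a compact convex set, let f : ℝⁿ → ℝ be differentiable and m-strongly convex on X with m > 0, and let x* be the minimizer of f over X. Let S ⊆ X be a finite nonempty set and suppose S is a proper support of x, i.e., x = Σ_{s ∈ S} λ_s s with λ_s > 0 for every s ∈ S and Σ_{s ∈ S} λ_s = 1. Then the strong Wolfe gap w(x, S) equals 0 if and only if x = x*. -/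
open Set
open scoped RealInnerProductSpace BigOperators

/-!
If the strong Wolfe gap vanishes, the largest value of `⟪∇f x, ·⟫` on `S`, which dominates its
value at the convex combination `x`, is also its least value on `X`; so the slope of `f` at `x`
towards `x*` is nonnegative, and strong convexity then forces `x = x*`. Conversely, at `x = x*`
first-order optimality makes `x` minimize `⟪∇f x, ·⟫` over `X`; an average of values on `S` with
positive weights that equals their lower bound forces all of them to equal it, so both terms of
the gap are `⟪∇f x, x⟫`.
-/

namespace Finset

variable {ι : Type*} {t : Finset ι} {w v : ι → ℝ}

theorem sum_mul_le_csSup_image (hw : ∀ i ∈ t, 0 ≤ w i) (hw1 : ∑ i ∈ t, w i = 1) :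
    ∑ i ∈ t, w i * v i ≤ sSup (v '' t) :=
  calc ∑ i ∈ t, w i * v i
      ≤ ∑ i ∈ t, w i * sSup (v '' t) := sum_le_sum fun i hi =>
        mul_le_mul_of_nonneg_left
          (le_csSup (t.finite_toSet.image v).bddAbove (Set.mem_image_of_mem v hi)) (hw i hi)
    _ = sSup (v '' t) := by rw [← sum_mul, hw1, one_mul]

theorem csSup_image_eq_of_sum_mul_eq_of_le {c : ℝ} (hw : ∀ i ∈ t, 0 < w i)
    (hw1 : ∑ i ∈ t, w i = 1) (hle : ∀ i ∈ t, c ≤ v i) (hsum : ∑ i ∈ t, w i * v i = c) :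
    sSup (v '' t) = c := by
  have hterms := (sum_eq_sum_iff_of_le fun i hi =>
    mul_le_mul_of_nonneg_left (hle i hi) (hw i hi).le).1 (by rw [← sum_mul, hw1, one_mul, hsum])
  have hconst : EqOn v (fun _ => c) t := fun i hi =>
    (mul_left_cancel₀ (hw i hi).ne' (hterms i hi)).symm
  have hne : (t : Set ι).Nonempty := coe_nonempty.2 (nonempty_of_sum_ne_zero (hw1 ▸ one_ne_zero))
  rw [hconst.image_eq, hne.image_const, csSup_singleton]

end Finset

section InnerProductSpace

variable {E : Type*} [NormedAddCommGroup E] [InnerProductSpace ℝ E]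

theorem Convex.inner_sub_nonneg_of_isMinOn [CompleteSpace E] {X : Set E} (hX : Convex ℝ X)
    {f : E → ℝ} {g a z : E} (hf : HasGradientAt f g a) (hmin : IsMinOn f X a) (ha : a ∈ X)
    (hz : z ∈ X) : 0 ≤ ⟪g, z - a⟫ := by
  simpa using hmin.localize.hasFDerivWithinAt_nonneg hf.hasFDerivAt.hasFDerivWithinAt
    (sub_mem_posTangentConeAt_of_segment_subset (hX.segment_subset ha hz))

theorem eq_of_strongly_convex_of_le_of_inner_sub_nonneg {f : E → ℝ} {g x y : E} {m : ℝ}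
    (hm : 0 < m) (hstrconv : f x + ⟪g, y - x⟫ + (m / 2) * ‖y - x‖ ^ 2 ≤ f y)
    (hle : f y ≤ f x) (hslope : 0 ≤ ⟪g, y - x⟫) : y = x := by
  have hsq : ‖y - x‖ ^ 2 ≤ 0 := by nlinarith
  simpa [sub_eq_zero] using le_antisymm hsq (sq_nonneg _)

end InnerProductSpace

theorem strong_wolfe_gap_eq_zero_iff_general
    {n : ℕ} (X : Set (EuclideanSpace ℝ (Fin n)))
    (hXcompact : IsCompact X) (hXconvex : Convex ℝ X)
    (m : ℝ) (hm : 0 < m)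
    (f : EuclideanSpace ℝ (Fin n) → ℝ) (f' : EuclideanSpace ℝ (Fin n) → EuclideanSpace ℝ (Fin n))
    (hgrad : ∀ x, HasGradientAt f (f' x) x)
    (hstrconv : ∀ x ∈ X, ∀ y ∈ X,
      f x + ⟪f' x, y - x⟫ + (m / 2) * ‖y - x‖ ^ 2 ≤ f y)
    (xs : EuclideanSpace ℝ (Fin n)) (hxsX : xs ∈ X) (hxsmin : ∀ y ∈ X, f xs ≤ f y)
    (S : Set (EuclideanSpace ℝ (Fin n))) (hSX : S ⊆ X)
    (hSfin : S.Finite)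
    (x : EuclideanSpace ℝ (Fin n))
    (lam : EuclideanSpace ℝ (Fin n) → ℝ)
    (hlam_pos : ∀ s ∈ S, 0 < lam s)
    (hlam_sum : ∑ s ∈ hSfin.toFinset, lam s = 1)
    (hlam_comb : x = ∑ s ∈ hSfin.toFinset, lam s • s) :
    sSup ((fun y => ⟪f' x, y⟫) '' S) - sInf ((fun z => ⟪f' x, z⟫) '' X) = 0 ↔ x = xs := by
  obtain ⟨t, rfl⟩ := hSfin.exists_finset_coe
  rw [Finset.finite_toSet_toFinset] at hlam_sum hlam_comb
  set g := f' x
  have hxX : x ∈ X := hlam_comb ▸ hXconvex.sum_mem (fun s hs => (hlam_pos s hs).le) hlam_sum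
    (fun s hs => hSX hs)
  have hx_avg : ∑ s ∈ t, lam s * ⟪g, s⟫ = ⟪g, x⟫ := by
    simp only [hlam_comb, inner_sum, real_inner_smul_right]
  have hinf_le : ∀ z ∈ X, sInf ((fun z => ⟪g, z⟫) '' X) ≤ ⟪g, z⟫ := fun z hz =>
    csInf_le (hXcompact.bddBelow_image (continuous_const.inner continuous_id).continuousOn)
      (mem_image_of_mem _ hz)
  constructor
  · intro hgap
    have hslope : 0 ≤ ⟪g, xs - x⟫ := by
      rw [inner_sub_right]
      linarith [Finset.sum_mul_le_csSup_image (v := fun y => ⟪g, y⟫)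
        (fun s hs => (hlam_pos s hs).le) hlam_sum, hinf_le xs hxsX]
    exact (eq_of_strongly_convex_of_le_of_inner_sub_nonneg hm (hstrconv x hxX xs hxsX)
      (hxsmin x hxX) hslope).symm
  · rintro rfl
    have hopt : ∀ z ∈ X, ⟪g, x⟫ ≤ ⟪g, z⟫ := fun z hz => by
      simpa [inner_sub_right] using hXconvex.inner_sub_nonneg_of_isMinOn (hgrad x) hxsmin hxX hz
    have hsup : sSup ((fun y => ⟪g, y⟫) '' t) = ⟪g, x⟫ :=
      Finset.csSup_image_eq_of_sum_mul_eq_of_le hlam_pos hlam_sum (fun s hs => hopt s (hSX hs))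
        hx_avg
    have hinf : sInf ((fun z => ⟪g, z⟫) '' X) = ⟪g, x⟫ :=
      IsLeast.csInf_eq ⟨mem_image_of_mem _ hxX, forall_mem_image.2 hopt⟩
    rw [hsup, hinf, sub_self]

/-- For `f` `m`-strongly convex on a compact convex set `X` with
minimizer `xs`, and `S ⊆ X` a finite nonempty proper support of `x` (i.e. `x` is a
convex combination of the points of `S` with strictly positive weights), the strong
Wolfe gap `w(x, S)` is zero if and only if `x = xs`. -/
theorem strong_wolfe_gap_eq_zero_iff
    {n : ℕ} (X : Set (EuclideanSpace ℝ (Fin n)))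
    (hXcompact : IsCompact X) (hXconvex : Convex ℝ X)
    (m : ℝ) (hm : 0 < m)
    (f : EuclideanSpace ℝ (Fin n) → ℝ) (f' : EuclideanSpace ℝ (Fin n) → EuclideanSpace ℝ (Fin n))
    (hgrad : ∀ x, HasGradientAt f (f' x) x)
    (hstrconv : ∀ x ∈ X, ∀ y ∈ X,
      f x + ⟪f' x, y - x⟫ + (m / 2) * ‖y - x‖ ^ 2 ≤ f y)
    (xs : EuclideanSpace ℝ (Fin n)) (hxsX : xs ∈ X) (hxsmin : ∀ y ∈ X, f xs ≤ f y)
    (S : Set (EuclideanSpace ℝ (Fin n))) (hSX : S ⊆ X)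
    (hSfin : S.Finite) (hSne : S.Nonempty)
    (x : EuclideanSpace ℝ (Fin n))
    (lam : EuclideanSpace ℝ (Fin n) → ℝ)
    (hlam_pos : ∀ s ∈ S, 0 < lam s)
    (hlam_sum : ∑ s ∈ hSfin.toFinset, lam s = 1)
    (hlam_comb : x = ∑ s ∈ hSfin.toFinset, lam s • s) :
    sSup ((fun y => ⟪f' x, y⟫) '' S) - sInf ((fun z => ⟪f' x, z⟫) '' X) = 0 ↔ x = xs :=
  strong_wolfe_gap_eq_zero_iff_general X hXcompact hXconvex m hm f f' hgrad hstrconv xs hxsX hxsmin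
    S hSX hSfin x lam hlam_pos hlam_sum hlam_comb
end

section
/- Let C ⊆ ℝⁿ be a nonempty closed convex set, let x₀ ∈ C, let σ > 0 and η₀ > 0, let f : ℝⁿ → ℝ be differentiable and convex, set f_σ(x) = f(x) + (σ/2)‖x − x₀‖², and let x*_σ be the minimizer of f_σ over C. Let (a_k)_{k≥0} and (η_k)_{k≥1} be positive with a₀ = 1, A_k = Σ_{i=0}^{k} a_i, θ_k = a_k/A_k, and θ_k ≤ √(σ/(2(η_k + σ))) for all k ≥ 1. Let ε_k^M ≥ 0 for k ≥ 0 and ε_k^ℓ ≥ 0 for k ≥ 1, with ε₀^ℓ = 0. Set z₀ = (η₀ + σ)x₀ − ∇f(x₀), and suppose y₀ = v₀ = ŷ₀ ∈ C satisfies M₀(y₀) ≤ inf_{u ∈ C} M₀(u) + ε₀^M, where M₀(u) = −⟨z₀, u⟩ + ((σ + η₀)/2)‖u‖², as well as f(y₀) ≤ f(x₀) + ⟨∇f(x₀), y₀ − x₀⟩ + (η₀/2)‖y₀ − x₀‖². For k ≥ 1, suppose the sequences satisfy: x_k = (1/(1+θ_k))y_{k−1} + (θ_k/(1+θ_k))v_{k−1};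 z_k = z_{k−1} − a_k ∇f_σ(x_k) + σ a_k x_k; v_k ∈ C with M_k(v_k) ≤ inf_{u ∈ C} M_k(u) + ε_k^M, where M_k(u) = −⟨z_k, u⟩ + ((σ A_k + η₀)/2)‖u‖²; ŷ_k = (1 − θ_k)y_{k−1} + θ_k v_k; y_k ∈ C with ℓ_k(y_k) ≤ inf_{u ∈ C} ℓ_k(u) + ε_k^ℓ, where ℓ_k(u) = ⟨∇f_σ(ŷ_k), u − ŷ_k⟩ + ((η_k + σ)/2)‖u − ŷ_k‖²; and moreover f(ŷ_k) ≤ f(x_k) + ⟨∇f(x_k), ŷ_k − x_k⟩ + (η_k/2)‖ŷ_k − x_k‖² and f(y_k) ≤ f(ŷ_k) + ⟨∇f(ŷ_k), y_k − ŷ_k⟩ + (η_k/2)‖y_k − ŷ_k‖². Then for all k ≥ 1: (1/(η_k + σ))·‖G^σ_{η_k+σ}(ŷ_k)‖² ≤ (1/A_k)·( η₀‖x*_σ − x₀‖² + 2·Σ_{i=0}^{k} (2ε_i^M + A_i ε_i^ℓ) ), where G^σ_{η+σ}(ŷ) = (η + σ)(ŷ − P_C(ŷ − (1/(η+σ))∇f_σ(ŷ)))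 is the gradient mapping of f_σ on C. -/
/-!
The iteration is analysed through the estimate sequence `Φ_k`, the `a_i`-weighted sum of the
strongly convex lower models of `f_σ` at the points `x_i`. Up to an additive constant `Φ_k` is the
auxiliary function `M_k`, so the inexact minimality of `v_k` makes `Φ_k(v_k)` almost minimal and,
by strong convexity, pays for `‖v_{k+1} - v_k‖²`. With the coupling of `x_k`, `ŷ_k` and the weight
condition `θ_k² (η_k + σ) ≤ σ/2` this propagates `A_k f_σ(y_k) ≤ Φ_k(v_k) + errors`. Since
`Φ_k ≤ A_k f_σ + (η₀/2)‖· - x₀‖²`, this bounds `A_k (f_σ(ŷ_k) - f_σ(x*_σ))`, and the projected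
gradient step from `ŷ_k` decreases `f_σ` by at least `‖G(ŷ_k)‖² / (2(η_k + σ))`.
-/

open Set
open scoped RealInnerProductSpace BigOperators

variable {E : Type*} [NormedAddCommGroup E] [InnerProductSpace ℝ E]

theorem ConvexOn.add_inner_le_of_hasGradientAt [CompleteSpace E] {f : E → ℝ} {g p : E}
    (hf : ConvexOn ℝ univ f) (hg : HasGradientAt f g p) (q : E) :
    f p + ⟪g, q - p⟫ ≤ f q := by
  have hline : HasDerivAt (f ∘ AffineMap.lineMap p q) ⟪g, q - p⟫ (0 : ℝ) := by
    have hl : HasDerivAt (AffineMap.lineMap p q : ℝ → E) (q - p) 0 :=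
      AffineMap.hasDerivAt_lineMap
    have := (AffineMap.lineMap_apply_zero p q (k := ℝ)).symm ▸ hg.hasFDerivAt
    simpa using this.comp_hasDerivAt (0 : ℝ) hl
  have := (hf.comp_affineMap (AffineMap.lineMap p q)).le_slope_of_hasDerivAt
    (mem_univ 0) (mem_univ 1) one_pos hline
  simp [slope_def_field] at this
  linarith

theorem inner_sub_le_zero_of_forall_norm_sub_le {C : Set E} (hC : Convex ℝ C) {u P : E}
    (hP : P ∈ C) (hmin : ∀ w ∈ C, ‖u - P‖ ≤ ‖u - w‖) : ∀ w ∈ C, ⟪u - P, w - P⟫ ≤ 0 := by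
  have : Nonempty C := ⟨⟨P, hP⟩⟩
  refine (norm_eq_iInf_iff_real_inner_le_zero hC hP).mp (le_antisymm
    (le_ciInf fun w => hmin w w.2) (ciInf_le (f := fun w : C => ‖u - (w : E)‖) ⟨0, ?_⟩ ⟨P, hP⟩))
  rintro _ ⟨w, rfl⟩
  exact norm_nonneg _

theorem sq_norm_smul_add_smul_le {θ : ℝ} (h0 : 0 ≤ θ) (h1 : θ ≤ 1) (w d : E) :
    ‖θ • w + (1 - θ) • d‖ ^ 2 ≤ θ * ‖w‖ ^ 2 + (1 - θ) * ‖d‖ ^ 2 :=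
  (convexOn_norm convex_univ).pow (fun _ _ => norm_nonneg _) 2 |>.2 (mem_univ w) (mem_univ d)
    h0 (by linarith) (by ring)

noncomputable section

def quadModel (g : E → E) (c : ℝ) (p u : E) : ℝ := ⟪g p, u - p⟫ + c / 2 * ‖u - p‖ ^ 2

def linQuad (z : E) (B : ℝ) (u : E) : ℝ := -⟪z, u⟫ + B / 2 * ‖u‖ ^ 2

end

theorem quadModel_self (g : E → E) (c : ℝ) (p : E) : quadModel g c p p = 0 := by
  simp [quadModel]

theorem add_quadModel_regularized (f : E → ℝ) (f' : E → E) (x₀ : E) (σ c : ℝ) (p q : E) :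
    f p + σ / 2 * ‖p - x₀‖ ^ 2 + quadModel (fun u => f' u + σ • (u - x₀)) (c + σ) p q =
      f p + ⟪f' p, q - p⟫ + c / 2 * ‖q - p‖ ^ 2 + σ / 2 * ‖q - x₀‖ ^ 2 := by
  have hq : q - x₀ = (p - x₀) + (q - p) := by abel
  rw [quadModel, hq, norm_add_sq_real, inner_add_left, real_inner_smul_left]
  ring

theorem ConvexOn.regularized_add_quadModel_le [CompleteSpace E] {f : E → ℝ} {f' : E → E}
    (hf : ConvexOn ℝ univ f) {p : E} (hg : HasGradientAt f (f' p) p) (x₀ : E) (σ : ℝ) (q : E) :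
    f p + σ / 2 * ‖p - x₀‖ ^ 2 + quadModel (fun u => f' u + σ • (u - x₀)) σ p q ≤
      f q + σ / 2 * ‖q - x₀‖ ^ 2 := by
  have := add_quadModel_regularized f f' x₀ σ 0 p q
  rw [zero_add, zero_div, zero_mul, add_zero] at this
  linarith [hf.add_inner_le_of_hasGradientAt hg q]

theorem regularized_le_add_quadModel {f : E → ℝ} {f' : E → E} {c : ℝ} {p q : E}
    (hd : f q ≤ f p + ⟪f' p, q - p⟫ + c / 2 * ‖q - p‖ ^ 2) (x₀ : E) (σ : ℝ) :
    f q + σ / 2 * ‖q - x₀‖ ^ 2 ≤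
      f p + σ / 2 * ‖p - x₀‖ ^ 2 + quadModel (fun u => f' u + σ • (u - x₀)) (c + σ) p q := by
  linarith [add_quadModel_regularized f f' x₀ σ c p q]

theorem quadModel_eq_linQuad_add (g : E → E) (c : ℝ) (p u : E) :
    quadModel g c p u = linQuad (c • p - g p) c u + (c / 2 * ‖p‖ ^ 2 - ⟪g p, p⟫) := by
  rw [quadModel, linQuad, norm_sub_sq_real, inner_sub_right, inner_sub_left,
    real_inner_smul_left, real_inner_comm p u]
  ring

theorem linQuad_add_mul (z z' : E) (B B' t : ℝ) (u : E) :
    linQuad z B u + t * linQuad z' B' u = linQuad (z + t • z') (B + t * B') u := by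
  rw [linQuad, linQuad, linQuad, inner_add_left, real_inner_smul_left]
  ring

theorem linQuad_midpoint (z : E) (B : ℝ) (u v : E) :
    linQuad z B ((1 / 2 : ℝ) • u + (1 / 2 : ℝ) • v) =
      (linQuad z B u + linQuad z B v) / 2 - B / 8 * ‖u - v‖ ^ 2 := by
  have hsq : ‖(1 / 2 : ℝ) • u + (1 / 2 : ℝ) • v‖ ^ 2 =
      (‖u‖ ^ 2 + ‖v‖ ^ 2) / 2 - ‖u - v‖ ^ 2 / 4 := by
    rw [← smul_add, norm_smul, mul_pow, Real.norm_eq_abs, abs_of_pos (by norm_num)]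
    linarith [norm_add_sq_real u v, norm_sub_sq_real u v]
  rw [linQuad, linQuad, linQuad, hsq, inner_add_right, real_inner_smul_right,
    real_inner_smul_right]
  ring

theorem linQuad_add_sq_le {C : Set E} (hC : Convex ℝ C) {z v : E} {B ε : ℝ} (hv : v ∈ C)
    (hmin : ∀ u ∈ C, linQuad z B v ≤ linQuad z B u + ε) {u : E} (hu : u ∈ C) :
    linQuad z B v + B / 4 * ‖u - v‖ ^ 2 ≤ linQuad z B u + 2 * ε := by
  have := hmin _ (hC hu hv (by norm_num : (0 : ℝ) ≤ 1 / 2) (by norm_num : (0 : ℝ) ≤ 1 / 2)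
    (by norm_num))
  rw [linQuad_midpoint] at this
  linarith

theorem sub_eq_smul_of_coupling {θ : ℝ} (hθ : 1 + θ ≠ 0) {x y v v' ŷ : E}
    (hx : x = (1 / (1 + θ)) • y + (θ / (1 + θ)) • v) (hŷ : ŷ = (1 - θ) • y + θ • v') :
    ŷ - x = θ • (θ • (v' - x) + (1 - θ) • (v' - v)) := by
  have hy : y = (1 + θ) • x - θ • v := by
    rw [hx, smul_add, smul_smul, smul_smul, mul_one_div_cancel hθ, mul_div_cancel₀ _ hθ]
    module
  rw [hŷ, hy]
  module

theorem quadModel_proj_le {C : Set E} (hC : Convex ℝ C) {g : E → E} {L : ℝ} (hL : 0 < L)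
    {p P : E} (hp : p ∈ C) (hP : P ∈ C)
    (hPmin : ∀ w ∈ C, ‖p - (1 / L) • g p - P‖ ≤ ‖p - (1 / L) • g p - w‖) :
    quadModel g L p P ≤ -(L / 2) * ‖p - P‖ ^ 2 := by
  have hvi := inner_sub_le_zero_of_forall_norm_sub_le hC hP hPmin p hp
  have hexp : p - (1 / L) • g p - P = (p - P) - (1 / L) • g p := by abel
  rw [hexp, inner_sub_left, real_inner_smul_left, real_inner_self_eq_norm_sq] at hvi
  have hgL : L * ‖p - P‖ ^ 2 ≤ ⟪g p, p - P⟫ := by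
    have := mul_le_mul_of_nonneg_left hvi hL.le
    rw [mul_sub, ← mul_assoc, mul_one_div_cancel hL.ne', one_mul] at this
    linarith
  rw [quadModel, norm_sub_rev, ← neg_sub p P, inner_neg_right]
  linarith

theorem accelerated_step_le {F : E → ℝ} {g : E → E} {σ L θ : ℝ} (hθ₀ : 0 ≤ θ) (hθ₁ : θ ≤ 1)
    (hL : 0 ≤ L) (hθL : θ ^ 2 * L ≤ σ / 2) {x y v v' ŷ : E}
    (hx : x = (1 / (1 + θ)) • y + (θ / (1 + θ)) • v) (hŷ : ŷ = (1 - θ) • y + θ • v')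
    (hy : F x + quadModel g σ x y ≤ F y) (hdesc : F ŷ ≤ F x + quadModel g L x ŷ) :
    F ŷ ≤ (1 - θ) * F y + θ * (F x + quadModel g σ x v') + σ * (1 - θ) / 4 * ‖v' - v‖ ^ 2 := by
  have hσ : 0 ≤ σ := by nlinarith
  set w := θ • (v' - x) + (1 - θ) • (v' - v)
  have hsplit : ŷ - x = (1 - θ) • (y - x) + θ • (v' - x) := by rw [hŷ]; module
  have hnorm : ‖ŷ - x‖ ^ 2 = θ ^ 2 * ‖w‖ ^ 2 := by
    rw [sub_eq_smul_of_coupling (by linarith) hx hŷ, norm_smul, mul_pow, Real.norm_eq_abs,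
      sq_abs]
  have hw := sq_norm_smul_add_smul_le hθ₀ hθ₁ (v' - x) (v' - v)
  -- `θ² L ≤ σ/2` is exactly what lets the `L`-smoothness term be absorbed by strong convexity.
  have hsmooth : L / 2 * ‖ŷ - x‖ ^ 2 ≤ σ / 4 * (θ * ‖v' - x‖ ^ 2 + (1 - θ) * ‖v' - v‖ ^ 2) := by
    rw [hnorm]
    calc L / 2 * (θ ^ 2 * ‖w‖ ^ 2) = θ ^ 2 * L / 2 * ‖w‖ ^ 2 := by ring
      _ ≤ σ / 4 * ‖w‖ ^ 2 := mul_le_mul_of_nonneg_right (by linarith) (sq_nonneg _)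
      _ ≤ _ := by gcongr
  have hinner : ⟪g x, ŷ - x⟫ = (1 - θ) * ⟪g x, y - x⟫ + θ * ⟪g x, v' - x⟫ := by
    rw [hsplit, inner_add_right, real_inner_smul_right, real_inner_smul_right]
  unfold quadModel at *
  have h1θ : 0 ≤ 1 - θ := by linarith
  linarith [mul_le_mul_of_nonneg_left hy h1θ, mul_nonneg (mul_nonneg h1θ hσ) (sq_nonneg ‖y - x‖),
    mul_nonneg (mul_nonneg hθ₀ hσ) (sq_nonneg ‖v' - x‖)]

noncomputable section

/-- The estimate sequence `Φ_k(u) = Σ_{i ≤ k} a_i (F(x_i) + quadModel g σ x_i u) + η₀/2 ‖u - x₀‖²`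
of the accelerated method, with the paper's conventions `x_0 = x₀` and `a_0 = 1`. -/
def estimateSeq (F : E → ℝ) (g : E → E) (x₀ : E) (σ η₀ : ℝ) (a : ℕ → ℝ) (x : ℕ → E) :
    ℕ → E → ℝ
  | 0, u => F x₀ + quadModel g σ x₀ u + η₀ / 2 * ‖u - x₀‖ ^ 2
  | k + 1, u => estimateSeq F g x₀ σ η₀ a x k u +
      a (k + 1) * (F (x (k + 1)) + quadModel g σ (x (k + 1)) u)

end

/-- The AGD-Iter recursion; `L k` is the paper's `η_k + σ`, and `v`, `y` are inexact minimizers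
of `M_k = linQuad (z k) (σ A_k + η₀)` and `ℓ_k = quadModel g (L k) (ŷ k)` over `C`. -/
structure IsInexactAGD (C : Set E) (F : E → ℝ) (g : E → E) (x₀ : E) (σ η₀ : ℝ)
    (a L A εM εl : ℕ → ℝ) (z v y ŷ x : ℕ → E) : Prop where
  strongly_convex : ∀ p q, F p + quadModel g σ p q ≤ F q
  η₀_nonneg : 0 ≤ η₀
  a_pos : ∀ k, 0 < a k
  a_zero : a 0 = 1
  A_eq_sum : ∀ k, A k = ∑ i ∈ Finset.range (k + 1), a i
  L_pos : ∀ k, 1 ≤ k → 0 < L k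
  weight_le : ∀ k, 1 ≤ k → a k / A k ≤ √(σ / (2 * L k))
  εM_nonneg : ∀ k, 0 ≤ εM k
  εl_zero : εl 0 = 0
  z_zero : z 0 = (η₀ + σ) • x₀ - g x₀
  y_zero_mem : y 0 ∈ C
  v_zero : v 0 = y 0
  y_zero_inexact : ∀ u ∈ C, linQuad (z 0) (σ + η₀) (y 0) ≤ linQuad (z 0) (σ + η₀) u + εM 0
  descent_zero : F (y 0) ≤ F x₀ + quadModel g (η₀ + σ) x₀ (y 0)
  x_eq : ∀ k, 1 ≤ k → x k =
    (1 / (1 + a k / A k)) • y (k - 1) + ((a k / A k) / (1 + a k / A k)) • v (k - 1)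
  z_eq : ∀ k, 1 ≤ k → z k = z (k - 1) - a k • g (x k) + (σ * a k) • x k
  v_mem_of_one_le : ∀ k, 1 ≤ k → v k ∈ C
  v_inexact_of_one_le : ∀ k, 1 ≤ k → ∀ u ∈ C,
    linQuad (z k) (σ * A k + η₀) (v k) ≤ linQuad (z k) (σ * A k + η₀) u + εM k
  ŷ_eq : ∀ k, 1 ≤ k → ŷ k = (1 - a k / A k) • y (k - 1) + (a k / A k) • v k
  y_mem_of_one_le : ∀ k, 1 ≤ k → y k ∈ C
  y_inexact : ∀ k, 1 ≤ k → ∀ u ∈ C,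
    quadModel g (L k) (ŷ k) (y k) ≤ quadModel g (L k) (ŷ k) u + εl k
  descent_x : ∀ k, 1 ≤ k → F (ŷ k) ≤ F (x k) + quadModel g (L k) (x k) (ŷ k)
  descent_ŷ : ∀ k, 1 ≤ k → F (y k) ≤ F (ŷ k) + quadModel g (L k) (ŷ k) (y k)

namespace IsInexactAGD

variable {C : Set E} {F : E → ℝ} {g : E → E} {x₀ : E} {σ η₀ : ℝ} {a L A εM εl : ℕ → ℝ}
  {z v y ŷ x : ℕ → E}

theorem A_zero (h : IsInexactAGD C F g x₀ σ η₀ a L A εM εl z v y ŷ x) : A 0 = 1 := by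
  rw [h.A_eq_sum, Finset.sum_range_one, h.a_zero]

theorem A_succ (h : IsInexactAGD C F g x₀ σ η₀ a L A εM εl z v y ŷ x) (k : ℕ) :
    A (k + 1) = A k + a (k + 1) := by
  rw [h.A_eq_sum, h.A_eq_sum, Finset.sum_range_succ]

theorem A_pos (h : IsInexactAGD C F g x₀ σ η₀ a L A εM εl z v y ŷ x) (k : ℕ) : 0 < A k := by
  rw [h.A_eq_sum]
  exact Finset.sum_pos (fun i _ => h.a_pos i) Finset.nonempty_range_add_one

theorem mul_weight (h : IsInexactAGD C F g x₀ σ η₀ a L A εM εl z v y ŷ x) (k : ℕ) :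
    A k * (a k / A k) = a k :=
  mul_div_cancel₀ _ (h.A_pos k).ne'

theorem mul_one_sub_weight (h : IsInexactAGD C F g x₀ σ η₀ a L A εM εl z v y ŷ x) (k : ℕ) :
    A (k + 1) * (1 - a (k + 1) / A (k + 1)) = A k := by
  rw [mul_one_sub, h.mul_weight, h.A_succ]
  ring

theorem weight_pos (h : IsInexactAGD C F g x₀ σ η₀ a L A εM εl z v y ŷ x) (k : ℕ) :
    0 < a k / A k :=
  div_pos (h.a_pos k) (h.A_pos k)

theorem weight_le_one (h : IsInexactAGD C F g x₀ σ η₀ a L A εM εl z v y ŷ x) (k : ℕ) :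
    a k / A k ≤ 1 := by
  rw [div_le_one (h.A_pos k), h.A_eq_sum]
  exact Finset.single_le_sum (fun i _ => (h.a_pos i).le) (Finset.self_mem_range_succ k)

theorem weight_sq_mul_le (h : IsInexactAGD C F g x₀ σ η₀ a L A εM εl z v y ŷ x) {k : ℕ}
    (hk : 1 ≤ k) : (a k / A k) ^ 2 * L k ≤ σ / 2 := by
  have hsq := (Real.le_sqrt' (h.weight_pos k)).mp (h.weight_le k hk)
  rw [le_div_iff₀ (by linarith [h.L_pos k hk])] at hsq
  linarith

theorem v_mem (h : IsInexactAGD C F g x₀ σ η₀ a L A εM εl z v y ŷ x) : ∀ k, v k ∈ C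
  | 0 => h.v_zero ▸ h.y_zero_mem
  | k + 1 => h.v_mem_of_one_le (k + 1) k.succ_pos

theorem y_mem (h : IsInexactAGD C F g x₀ σ η₀ a L A εM εl z v y ŷ x) : ∀ k, y k ∈ C
  | 0 => h.y_zero_mem
  | k + 1 => h.y_mem_of_one_le (k + 1) k.succ_pos

theorem ŷ_mem (h : IsInexactAGD C F g x₀ σ η₀ a L A εM εl z v y ŷ x) (hC : Convex ℝ C)
    {k : ℕ} (hk : 1 ≤ k) : ŷ k ∈ C := by
  rw [h.ŷ_eq k hk]
  exact hC (h.y_mem _) (h.v_mem _) (by linarith [h.weight_le_one k]) (h.weight_pos k).le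
    (by ring)

theorem v_inexact (h : IsInexactAGD C F g x₀ σ η₀ a L A εM εl z v y ŷ x) (k : ℕ) :
    ∀ u ∈ C, linQuad (z k) (σ * A k + η₀) (v k) ≤ linQuad (z k) (σ * A k + η₀) u + εM k := by
  rcases k with _ | k
  · rw [h.A_zero, mul_one, h.v_zero]
    exact h.y_zero_inexact
  · exact h.v_inexact_of_one_le (k + 1) k.succ_pos

theorem estimateSeq_eq_linQuad_add (h : IsInexactAGD C F g x₀ σ η₀ a L A εM εl z v y ŷ x)
    (k : ℕ) : ∃ c, ∀ u, estimateSeq F g x₀ σ η₀ a x k u = linQuad (z k) (σ * A k + η₀) u + c := by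
  induction k with
  | zero =>
    refine ⟨F x₀ + ((η₀ + σ) / 2 * ‖x₀‖ ^ 2 - ⟪g x₀, x₀⟫), fun u => ?_⟩
    have hΦ : estimateSeq F g x₀ σ η₀ a x 0 u = F x₀ + quadModel g (η₀ + σ) x₀ u := by
      simp only [estimateSeq, quadModel]
      ring
    rw [hΦ, quadModel_eq_linQuad_add, h.z_zero, h.A_zero, mul_one, add_comm σ]
    ring
  | succ k ih =>
    obtain ⟨c, hc⟩ := ih
    refine ⟨c + a (k + 1) * (F (x (k + 1)) +
      (σ / 2 * ‖x (k + 1)‖ ^ 2 - ⟪g (x (k + 1)), x (k + 1)⟫)), fun u => ?_⟩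
    have hz : z (k + 1) = z k + a (k + 1) • (σ • x (k + 1) - g (x (k + 1))) := by
      rw [h.z_eq (k + 1) k.succ_pos, Nat.add_sub_cancel]
      module
    have hB : σ * A (k + 1) + η₀ = σ * A k + η₀ + a (k + 1) * σ := by
      rw [h.A_succ]
      ring
    rw [estimateSeq, hc, quadModel_eq_linQuad_add, hz, hB, ← linQuad_add_mul]
    ring

theorem estimateSeq_le (h : IsInexactAGD C F g x₀ σ η₀ a L A εM εl z v y ŷ x) (k : ℕ) (u : E) :
    estimateSeq F g x₀ σ η₀ a x k u ≤ A k * F u + η₀ / 2 * ‖u - x₀‖ ^ 2 := by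
  induction k with
  | zero =>
    rw [estimateSeq, h.A_zero, one_mul]
    linarith [h.strongly_convex x₀ u]
  | succ k ih =>
    rw [estimateSeq, h.A_succ]
    linarith [mul_le_mul_of_nonneg_left (h.strongly_convex (x (k + 1)) u) (h.a_pos (k + 1)).le]

theorem estimateSeq_v_add_sq_le (h : IsInexactAGD C F g x₀ σ η₀ a L A εM εl z v y ŷ x)
    (hC : Convex ℝ C) (k : ℕ) {u : E} (hu : u ∈ C) :
    estimateSeq F g x₀ σ η₀ a x k (v k) + (σ * A k + η₀) / 4 * ‖u - v k‖ ^ 2 ≤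
      estimateSeq F g x₀ σ η₀ a x k u + 2 * εM k := by
  obtain ⟨c, hc⟩ := h.estimateSeq_eq_linQuad_add k
  rw [hc, hc]
  linarith [linQuad_add_sq_le hC (h.v_mem k) (h.v_inexact k) hu]

theorem estimateSeq_v_le (h : IsInexactAGD C F g x₀ σ η₀ a L A εM εl z v y ŷ x) (k : ℕ)
    {u : E} (hu : u ∈ C) :
    estimateSeq F g x₀ σ η₀ a x k (v k) ≤ estimateSeq F g x₀ σ η₀ a x k u + εM k := by
  obtain ⟨c, hc⟩ := h.estimateSeq_eq_linQuad_add k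
  rw [hc, hc]
  linarith [h.v_inexact k u hu]

theorem mul_F_ŷ_succ_le (h : IsInexactAGD C F g x₀ σ η₀ a L A εM εl z v y ŷ x)
    (hC : Convex ℝ C) {k : ℕ} {S : ℝ}
    (hk : A k * F (y k) ≤ estimateSeq F g x₀ σ η₀ a x k (v k) + S) :
    A (k + 1) * F (ŷ (k + 1)) ≤ estimateSeq F g x₀ σ η₀ a x (k + 1) (v (k + 1)) + S + 2 * εM k := by
  have hx := h.x_eq (k + 1) k.succ_pos
  have hŷ := h.ŷ_eq (k + 1) k.succ_pos
  rw [Nat.add_sub_cancel] at hx hŷ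
  have hstep := accelerated_step_le (h.weight_pos (k + 1)).le (h.weight_le_one (k + 1))
    (h.L_pos (k + 1) k.succ_pos).le (h.weight_sq_mul_le k.succ_pos) hx hŷ
    (h.strongly_convex _ _) (h.descent_x (k + 1) k.succ_pos)
  set M := F (x (k + 1)) + quadModel g σ (x (k + 1)) (v (k + 1))
  have hscaled : A (k + 1) * F (ŷ (k + 1)) ≤
      A k * F (y k) + a (k + 1) * M + σ * A k / 4 * ‖v (k + 1) - v k‖ ^ 2 := by
    refine (mul_le_mul_of_nonneg_left hstep (h.A_pos (k + 1)).le).trans_eq ?_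
    linear_combination (F (y k) + σ / 4 * ‖v (k + 1) - v k‖ ^ 2) * h.mul_one_sub_weight k +
      M * h.mul_weight (k + 1)
  have hgrowth := h.estimateSeq_v_add_sq_le hC k (h.v_mem (k + 1))
  rw [estimateSeq]
  linarith [mul_nonneg h.η₀_nonneg (sq_nonneg ‖v (k + 1) - v k‖)]

theorem F_y_le_add_quadModel (h : IsInexactAGD C F g x₀ σ η₀ a L A εM εl z v y ŷ x) {k : ℕ} (hk : 1 ≤ k)
    {u : E} (hu : u ∈ C) : F (y k) ≤ F (ŷ k) + quadModel g (L k) (ŷ k) u + εl k := by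
  linarith [h.descent_ŷ k hk, h.y_inexact k hk u hu]

-- The slack `2 * εM k` on the left is spent at the next step, comparing `v k` with `v (k + 1)`.
theorem mul_F_y_add_le (h : IsInexactAGD C F g x₀ σ η₀ a L A εM εl z v y ŷ x)
    (hC : Convex ℝ C) (k : ℕ) :
    A k * F (y k) + 2 * εM k ≤
      estimateSeq F g x₀ σ η₀ a x k (v k) +
        ∑ i ∈ Finset.range (k + 1), (2 * εM i + A i * εl i) := by
  induction k with
  | zero =>
    have hd := h.descent_zero
    simp only [estimateSeq, quadModel, zero_add, Finset.sum_range_one, h.A_zero, h.εl_zero,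
      h.v_zero] at hd ⊢
    linarith
  | succ k ih =>
    have hŷ := h.mul_F_ŷ_succ_le hC
      (S := ∑ i ∈ Finset.range (k + 1), (2 * εM i + A i * εl i) - 2 * εM k) (by linarith [ih])
    have hy := h.F_y_le_add_quadModel k.succ_pos (h.ŷ_mem hC k.succ_pos)
    rw [quadModel_self] at hy
    rw [Finset.sum_range_succ]
    linarith [mul_le_mul_of_nonneg_left hy (h.A_pos (k + 1)).le]

theorem mul_F_ŷ_sub_le (h : IsInexactAGD C F g x₀ σ η₀ a L A εM εl z v y ŷ x)
    (hC : Convex ℝ C) {xs : E} (hxs : xs ∈ C) {k : ℕ} (hk : 1 ≤ k) :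
    A k * (F (ŷ k) - F xs + εl k) ≤
      η₀ / 2 * ‖xs - x₀‖ ^ 2 + ∑ i ∈ Finset.range (k + 1), (2 * εM i + A i * εl i) := by
  obtain ⟨m, rfl⟩ : ∃ m, k = m + 1 := ⟨k - 1, by omega⟩
  have hŷ := h.mul_F_ŷ_succ_le hC (k := m)
    (S := ∑ i ∈ Finset.range (m + 1), (2 * εM i + A i * εl i) - 2 * εM m)
    (by linarith [h.mul_F_y_add_le hC m])
  rw [Finset.sum_range_succ]
  linarith [h.estimateSeq_v_le (m + 1) hxs, h.estimateSeq_le (m + 1) xs, h.εM_nonneg (m + 1)]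

theorem gradient_mapping_bound (h : IsInexactAGD C F g x₀ σ η₀ a L A εM εl z v y ŷ x)
    (hC : Convex ℝ C) {xs : E} (hxs : xs ∈ C) (hxs_min : ∀ u ∈ C, F xs ≤ F u) {k : ℕ}
    (hk : 1 ≤ k) {P : E} (hP : P ∈ C)
    (hP_min : ∀ w ∈ C, ‖ŷ k - (1 / L k) • g (ŷ k) - P‖ ≤ ‖ŷ k - (1 / L k) • g (ŷ k) - w‖) :
    1 / L k * ‖L k • (ŷ k - P)‖ ^ 2 ≤
      1 / A k * (η₀ * ‖xs - x₀‖ ^ 2 +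
        2 * ∑ i ∈ Finset.range (k + 1), (2 * εM i + A i * εl i)) := by
  have hL := h.L_pos k hk
  have hmodel := quadModel_proj_le hC hL (h.ŷ_mem hC hk) hP hP_min
  have hdecrease : L k / 2 * ‖ŷ k - P‖ ^ 2 ≤ F (ŷ k) - F xs + εl k := by
    linarith [h.F_y_le_add_quadModel hk hP, hxs_min _ (h.y_mem k)]
  have hgap := mul_le_mul_of_nonneg_left hdecrease (h.A_pos k).le
  have hlhs : 1 / L k * ‖L k • (ŷ k - P)‖ ^ 2 = L k * ‖ŷ k - P‖ ^ 2 := by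
    rw [norm_smul, Real.norm_eq_abs, abs_of_pos hL]
    field_simp
  rw [hlhs, one_div_mul_eq_div, le_div_iff₀ (h.A_pos k)]
  linarith [h.mul_F_ŷ_sub_le hC hxs hk]

end IsInexactAGD

theorem inexact_agd_gradient_mapping_bound_general
    {n : ℕ} (C : Set (EuclideanSpace ℝ (Fin n)))
    (hCconvex : Convex ℝ C)
    (proj : EuclideanSpace ℝ (Fin n) → EuclideanSpace ℝ (Fin n))
    (hproj_mem : ∀ u, proj u ∈ C)
    (hproj_min : ∀ u, ∀ w ∈ C, ‖u - proj u‖ ≤ ‖u - w‖)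
    (f : EuclideanSpace ℝ (Fin n) → ℝ) (f' : EuclideanSpace ℝ (Fin n) → EuclideanSpace ℝ (Fin n))
    (hgrad : ∀ x, HasGradientAt f (f' x) x)
    (hconv : ConvexOn ℝ Set.univ f)
    (x0 : EuclideanSpace ℝ (Fin n))
    (σ η0 : ℝ) (hσ : 0 < σ) (hη0 : 0 < η0)
    (xsσ : EuclideanSpace ℝ (Fin n)) (hxsσC : xsσ ∈ C)
    (hxsσmin : ∀ u ∈ C,
      f xsσ + (σ / 2) * ‖xsσ - x0‖ ^ 2 ≤ f u + (σ / 2) * ‖u - x0‖ ^ 2)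
    (a η A εM εl : ℕ → ℝ)
    (ha_pos : ∀ k, 0 < a k) (ha0 : a 0 = 1)
    (hη_pos : ∀ k, 1 ≤ k → 0 < η k)
    (hA : ∀ k, A k = ∑ i ∈ Finset.range (k + 1), a i)
    (hθ : ∀ k, 1 ≤ k → a k / A k ≤ Real.sqrt (σ / (2 * (η k + σ))))
    (hεM : ∀ k, 0 ≤ εM k) (hεl0 : εl 0 = 0)
    (z v y yh xx : ℕ → EuclideanSpace ℝ (Fin n))
    (hz0 : z 0 = (η0 + σ) • x0 - f' x0)
    (hy0C : y 0 ∈ C) (hv0 : v 0 = y 0)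
    (hy0M : ∀ u ∈ C,
      -⟪z 0, y 0⟫ + ((σ + η0) / 2) * ‖y 0‖ ^ 2 ≤
        (-⟪z 0, u⟫ + ((σ + η0) / 2) * ‖u‖ ^ 2) + εM 0)
    (hy0descent : f (y 0) ≤ f x0 + ⟪f' x0, y 0 - x0⟫ + (η0 / 2) * ‖y 0 - x0‖ ^ 2)
    (hxx : ∀ k, 1 ≤ k → xx k =
      (1 / (1 + a k / A k)) • y (k - 1) + ((a k / A k) / (1 + a k / A k)) • v (k - 1))
    (hz : ∀ k, 1 ≤ k → z k =
      z (k - 1) - a k • (f' (xx k) + σ • (xx k - x0)) + (σ * a k) • xx k)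
    (hvC : ∀ k, 1 ≤ k → v k ∈ C)
    (hvM : ∀ k, 1 ≤ k → ∀ u ∈ C,
      -⟪z k, v k⟫ + ((σ * A k + η0) / 2) * ‖v k‖ ^ 2 ≤
        (-⟪z k, u⟫ + ((σ * A k + η0) / 2) * ‖u‖ ^ 2) + εM k)
    (hyh : ∀ k, 1 ≤ k → yh k = (1 - a k / A k) • y (k - 1) + (a k / A k) • v k)
    (hyC : ∀ k, 1 ≤ k → y k ∈ C)
    (hyl : ∀ k, 1 ≤ k → ∀ u ∈ C,
      ⟪f' (yh k) + σ • (yh k - x0), y k - yh k⟫ + ((η k + σ) / 2) * ‖y k - yh k‖ ^ 2 ≤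
        (⟪f' (yh k) + σ • (yh k - x0), u - yh k⟫ + ((η k + σ) / 2) * ‖u - yh k‖ ^ 2) + εl k)
    (hdescent1 : ∀ k, 1 ≤ k →
      f (yh k) ≤ f (xx k) + ⟪f' (xx k), yh k - xx k⟫ + (η k / 2) * ‖yh k - xx k‖ ^ 2)
    (hdescent2 : ∀ k, 1 ≤ k →
      f (y k) ≤ f (yh k) + ⟪f' (yh k), y k - yh k⟫ + (η k / 2) * ‖y k - yh k‖ ^ 2) :
    ∀ k, 1 ≤ k →
      (1 / (η k + σ)) *
          ‖(η k + σ) •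
            (yh k - proj (yh k - (1 / (η k + σ)) • (f' (yh k) + σ • (yh k - x0))))‖ ^ 2 ≤
        (1 / A k) *
          (η0 * ‖xsσ - x0‖ ^ 2 +
            2 * ∑ i ∈ Finset.range (k + 1), (2 * εM i + A i * εl i)) := by
  have h : IsInexactAGD C (fun u => f u + σ / 2 * ‖u - x0‖ ^ 2) (fun u => f' u + σ • (u - x0))
      x0 σ η0 a (fun k => η k + σ) A εM εl z v y yh xx :=
    { strongly_convex := fun p q => hconv.regularized_add_quadModel_le (hgrad p) x0 σ q
      η₀_nonneg := hη0.le
      a_pos := ha_pos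
      a_zero := ha0
      A_eq_sum := hA
      L_pos := fun k hk => add_pos (hη_pos k hk) hσ
      weight_le := hθ
      εM_nonneg := hεM
      εl_zero := hεl0
      z_zero := by simp [hz0]
      y_zero_mem := hy0C
      v_zero := hv0
      y_zero_inexact := hy0M
      descent_zero := regularized_le_add_quadModel hy0descent x0 σ
      x_eq := hxx
      z_eq := hz
      v_mem_of_one_le := hvC
      v_inexact_of_one_le := hvM
      ŷ_eq := hyh
      y_mem_of_one_le := hyC
      y_inexact := hyl
      descent_x := fun k hk => regularized_le_add_quadModel (hdescent1 k hk) x0 σ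
      descent_ŷ := fun k hk => regularized_le_add_quadModel (hdescent2 k hk) x0 σ }
  intro k hk
  exact h.gradient_mapping_bound hCconvex hxsσC hxsσmin hk (hproj_mem _) (hproj_min _)

/-- **Lemma: inexact accelerated iteration, AGD-Iter.** For the inexact
accelerated gradient sequences on a nonempty closed convex set `C` applied to the
regularized objective `f_σ(u) = f(u) + (σ/2)‖u - x₀‖²`, with inexact minimizers of the
auxiliary functions `M_k` and `ℓ_k` (errors `εM k`, `εl k`), descent conditions with
estimates `η k`, and weights satisfying `θ_k = a_k/A_k ≤ √(σ/(2(η_k+σ)))`, the gradient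
mapping of `f_σ` at `ŷ_k` satisfies
`(1/(η_k+σ))‖G^σ_{η_k+σ}(ŷ_k)‖² ≤ (1/A_k)(η₀‖x*_σ - x₀‖² + 2 Σ_{i≤k} (2εM_i + A_i εl_i))`. -/
theorem inexact_agd_gradient_mapping_bound
    {n : ℕ} (C : Set (EuclideanSpace ℝ (Fin n)))
    (hCne : C.Nonempty) (hCclosed : IsClosed C) (hCconvex : Convex ℝ C)
    (proj : EuclideanSpace ℝ (Fin n) → EuclideanSpace ℝ (Fin n))
    (hproj_mem : ∀ u, proj u ∈ C)
    (hproj_min : ∀ u, ∀ w ∈ C, ‖u - proj u‖ ≤ ‖u - w‖)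
    (f : EuclideanSpace ℝ (Fin n) → ℝ) (f' : EuclideanSpace ℝ (Fin n) → EuclideanSpace ℝ (Fin n))
    (hgrad : ∀ x, HasGradientAt f (f' x) x)
    (hconv : ConvexOn ℝ Set.univ f)
    (x0 : EuclideanSpace ℝ (Fin n)) (hx0 : x0 ∈ C)
    (σ η0 : ℝ) (hσ : 0 < σ) (hη0 : 0 < η0)
    (xsσ : EuclideanSpace ℝ (Fin n)) (hxsσC : xsσ ∈ C)
    (hxsσmin : ∀ u ∈ C,
      f xsσ + (σ / 2) * ‖xsσ - x0‖ ^ 2 ≤ f u + (σ / 2) * ‖u - x0‖ ^ 2)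
    (a η A εM εl : ℕ → ℝ)
    (ha_pos : ∀ k, 0 < a k) (ha0 : a 0 = 1)
    (hη_pos : ∀ k, 1 ≤ k → 0 < η k)
    (hA : ∀ k, A k = ∑ i ∈ Finset.range (k + 1), a i)
    (hθ : ∀ k, 1 ≤ k → a k / A k ≤ Real.sqrt (σ / (2 * (η k + σ))))
    (hεM : ∀ k, 0 ≤ εM k) (hεl : ∀ k, 1 ≤ k → 0 ≤ εl k) (hεl0 : εl 0 = 0)
    (z v y yh xx : ℕ → EuclideanSpace ℝ (Fin n))
    (hz0 : z 0 = (η0 + σ) • x0 - f' x0)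
    (hy0C : y 0 ∈ C) (hv0 : v 0 = y 0) (hyh0 : yh 0 = y 0)
    (hy0M : ∀ u ∈ C,
      -⟪z 0, y 0⟫ + ((σ + η0) / 2) * ‖y 0‖ ^ 2 ≤
        (-⟪z 0, u⟫ + ((σ + η0) / 2) * ‖u‖ ^ 2) + εM 0)
    (hy0descent : f (y 0) ≤ f x0 + ⟪f' x0, y 0 - x0⟫ + (η0 / 2) * ‖y 0 - x0‖ ^ 2)
    (hxx : ∀ k, 1 ≤ k → xx k =
      (1 / (1 + a k / A k)) • y (k - 1) + ((a k / A k) / (1 + a k / A k)) • v (k - 1))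
    (hz : ∀ k, 1 ≤ k → z k =
      z (k - 1) - a k • (f' (xx k) + σ • (xx k - x0)) + (σ * a k) • xx k)
    (hvC : ∀ k, 1 ≤ k → v k ∈ C)
    (hvM : ∀ k, 1 ≤ k → ∀ u ∈ C,
      -⟪z k, v k⟫ + ((σ * A k + η0) / 2) * ‖v k‖ ^ 2 ≤
        (-⟪z k, u⟫ + ((σ * A k + η0) / 2) * ‖u‖ ^ 2) + εM k)
    (hyh : ∀ k, 1 ≤ k → yh k = (1 - a k / A k) • y (k - 1) + (a k / A k) • v k)
    (hyC : ∀ k, 1 ≤ k → y k ∈ C)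
    (hyl : ∀ k, 1 ≤ k → ∀ u ∈ C,
      ⟪f' (yh k) + σ • (yh k - x0), y k - yh k⟫ + ((η k + σ) / 2) * ‖y k - yh k‖ ^ 2 ≤
        (⟪f' (yh k) + σ • (yh k - x0), u - yh k⟫ + ((η k + σ) / 2) * ‖u - yh k‖ ^ 2) + εl k)
    (hdescent1 : ∀ k, 1 ≤ k →
      f (yh k) ≤ f (xx k) + ⟪f' (xx k), yh k - xx k⟫ + (η k / 2) * ‖yh k - xx k‖ ^ 2)
    (hdescent2 : ∀ k, 1 ≤ k →
      f (y k) ≤ f (yh k) + ⟪f' (yh k), y k - yh k⟫ + (η k / 2) * ‖y k - yh k‖ ^ 2) :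
    ∀ k, 1 ≤ k →
      (1 / (η k + σ)) *
          ‖(η k + σ) •
            (yh k - proj (yh k - (1 / (η k + σ)) • (f' (yh k) + σ • (yh k - x0))))‖ ^ 2 ≤
        (1 / A k) *
          (η0 * ‖xsσ - x0‖ ^ 2 +
            2 * ∑ i ∈ Finset.range (k + 1), (2 * εM i + A i * εl i)) :=
  inexact_agd_gradient_mapping_bound_general C hCconvex proj hproj_mem hproj_min f f' hgrad hconv x0
    σ η0 hσ hη0 xsσ hxsσC hxsσmin a η A εM εl ha_pos ha0 hη_pos hA hθ hεM hεl0 z v y yh xx hz0 hy0C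
    hv0 hy0M hy0descent hxx hz hvC hvM hyh hyC hyl hdescent1 hdescent2
end

section
/- Let C ⊆ ℝⁿ be a nonempty closed convex set, let x̂ ∈ C, let g ∈ ℝⁿ, and let η > 0. Define ℓ(u) = ⟨g, u − x̂⟩ + (η/2)‖u − x̂‖² and let ȳ be the minimizer of ℓ over C. Then ℓ(ȳ) ≤ −(1/(2η))·‖G‖², where G = η(x̂ − ȳ). -/
open Set
open scoped RealInnerProductSpace

/-- Let `ℓ(u) = ⟪g, u - x̂⟫ + (η/2)‖u - x̂‖²` and let `ybar` be the
minimizer of `ℓ` over the nonempty closed convex set `C`. Then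
`ℓ(ybar) ≤ -(1/(2η))‖G‖²` where `G = η(x̂ - ybar)` is the gradient mapping. -/
theorem ell_min_le_neg_gradient_mapping_sq
    {n : ℕ} (C : Set (EuclideanSpace ℝ (Fin n)))
    (hCne : C.Nonempty) (hCclosed : IsClosed C) (hCconvex : Convex ℝ C)
    (xh g : EuclideanSpace ℝ (Fin n)) (hxhC : xh ∈ C)
    (η : ℝ) (hη : 0 < η)
    (ybar : EuclideanSpace ℝ (Fin n)) (hybarC : ybar ∈ C)
    (hybar_min : ∀ u ∈ C,
      ⟪g, ybar - xh⟫ + (η / 2) * ‖ybar - xh‖ ^ 2 ≤ ⟪g, u - xh⟫ + (η / 2) * ‖u - xh‖ ^ 2) :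
    ⟪g, ybar - xh⟫ + (η / 2) * ‖ybar - xh‖ ^ 2 ≤ -(1 / (2 * η)) * ‖η • (xh - ybar)‖ ^ 2 := by
  set A : ℝ := ⟪g, ybar - xh⟫ with hA
  set B : ℝ := (η / 2) * ‖ybar - xh‖ ^ 2 with hB
  have hB0 : (0:ℝ) ≤ B := by positivity
  have key : ∀ t : ℝ, 0 < t → t ≤ 1 → A + 2 * B ≤ t * B := by
    intro t ht0 ht1
    have hu : (1 - t) • ybar + t • xh ∈ C :=
      hCconvex hybarC hxhC (by linarith) ht0.le (by ring)
    have hmin := hybar_min _ hu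
    have heq : (1 - t) • ybar + t • xh - xh = (1 - t) • (ybar - xh) := by
      module
    rw [heq, real_inner_smul_right, norm_smul, Real.norm_eq_abs,
      abs_of_nonneg (by linarith : (0:ℝ) ≤ 1 - t)] at hmin
    have h2 : A + B ≤ (1 - t) * A + (1 - t)^2 * B := by
      rw [hA, hB]; nlinarith [hmin]
    have h3 : t * A + (2 * t - t^2) * B ≤ 0 := by nlinarith
    have h4 : t * (A + (2 - t) * B) ≤ 0 := by nlinarith
    have h5 : A + (2 - t) * B ≤ 0 := nonpos_of_mul_nonpos_right (by linarith [h4]) ht0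
    linarith
  have hmain : A + 2 * B ≤ 0 := by
    refine le_of_forall_pos_le_add fun ε hε => ?_
    have ht0 : 0 < min 1 (ε / (B + 1)) := lt_min one_pos (by positivity)
    have := key _ ht0 (min_le_left _ _)
    have h1 : min 1 (ε / (B + 1)) * B ≤ (ε / (B + 1)) * B :=
      mul_le_mul_of_nonneg_right (min_le_right _ _) hB0
    have h2 : (ε / (B + 1)) * B ≤ ε := by
      rw [div_mul_eq_mul_div, div_le_iff₀ (by linarith)]
      nlinarith
    linarith
  have hrhs : -(1 / (2 * η)) * ‖η • (xh - ybar)‖ ^ 2 = -B := by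
    rw [norm_smul, Real.norm_eq_abs, abs_of_pos hη, norm_sub_rev, hB]
    field_simp
  rw [hrhs]
  linarith
end

section
/- Let C ⊆ ℝⁿ be a nonempty closed convex set, let f : ℝⁿ → ℝ be differentiable and convex, let x₀ ∈ C, σ > 0, η₀ > 0, and ε ≥ 0. Define f_σ(u) = f(u) + (σ/2)‖u − x₀‖² and let x*_σ be the minimizer of f_σ over C. Suppose y₀ ∈ C satisfies m₀(y₀) ≤ inf_{u ∈ C} m₀(u) + ε, where m₀(u) = ⟨∇f(x₀), u − x₀⟩ + ((σ + η₀)/2)‖u − x₀‖², and also f(y₀) ≤ f(x₀) + ⟨∇f(x₀), y₀ − x₀⟩ + (η₀/2)‖y₀ − x₀‖². Then f_σ(y₀) − f_σ(x*_σ) ≤ (η₀/2)‖x*_σ − x₀‖² + ε. -/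
/-!
By the descent condition, `f_σ(y₀) ≤ f(x₀) + m₀(y₀)`; by ε-minimality of `y₀` this is at most
`f(x₀) + m₀(x*_σ) + ε`, and the first-order characterization of convexity,
`f(x₀) + ⟪∇f(x₀), u - x₀⟫ ≤ f(u)`, bounds that by `f_σ(x*_σ) + (η₀/2)‖x*_σ - x₀‖² + ε`.
-/

open Set
open scoped RealInnerProductSpace

theorem ConvexOn.add_fderiv_le {E : Type*} [NormedAddCommGroup E] [NormedSpace ℝ E]
    {s : Set E} {f : E → ℝ} {f' : E →L[ℝ] ℝ} {x y : E}
    (hf : ConvexOn ℝ s f) (hx : x ∈ s) (hy : y ∈ s) (hf' : HasFDerivAt f f' x) :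
    f x + f' (y - x) ≤ f y := by
  set ℓ : ℝ →ᵃ[ℝ] E := AffineMap.lineMap x y
  have hℓ0 : ℓ 0 = x := AffineMap.lineMap_apply_zero x y
  have hℓ1 : ℓ 1 = y := AffineMap.lineMap_apply_one x y
  have hderiv : HasDerivAt (f ∘ ℓ) (f' (y - x)) 0 := by
    refine HasFDerivAt.comp_hasDerivAt (0 : ℝ) ?_ AffineMap.hasDerivAt_lineMap
    rwa [hℓ0]
  have hslope := (hf.comp_affineMap ℓ).le_slope_of_hasDerivAt
    (show (0 : ℝ) ∈ ℓ ⁻¹' s by simpa [hℓ0]) (show (1 : ℝ) ∈ ℓ ⁻¹' s by simpa [hℓ1]) one_pos hderiv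
  rw [slope_def_field, Function.comp_apply, Function.comp_apply, hℓ0, hℓ1, sub_zero, div_one]
    at hslope
  linarith

theorem ConvexOn.add_inner_gradient_le {E : Type*} [NormedAddCommGroup E]
    [InnerProductSpace ℝ E] [CompleteSpace E] {s : Set E} {f : E → ℝ} {g x y : E}
    (hf : ConvexOn ℝ s f) (hx : x ∈ s) (hy : y ∈ s) (hg : HasGradientAt f g x) :
    f x + ⟪g, y - x⟫ ≤ f y :=
  hf.add_fderiv_le hx hy hg.hasFDerivAt

theorem initial_gap_bound_general
    {n : ℕ} (C : Set (EuclideanSpace ℝ (Fin n)))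
    (f : EuclideanSpace ℝ (Fin n) → ℝ) (f' : EuclideanSpace ℝ (Fin n) → EuclideanSpace ℝ (Fin n))
    (hgrad : ∀ x, HasGradientAt f (f' x) x)
    (hconv : ConvexOn ℝ Set.univ f)
    (x0 : EuclideanSpace ℝ (Fin n))
    (σ η0 ε : ℝ)
    (xsσ : EuclideanSpace ℝ (Fin n)) (hxsσC : xsσ ∈ C)
    (y0 : EuclideanSpace ℝ (Fin n))
    (hy0m : ∀ u ∈ C,
      ⟪f' x0, y0 - x0⟫ + ((σ + η0) / 2) * ‖y0 - x0‖ ^ 2 ≤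
        (⟪f' x0, u - x0⟫ + ((σ + η0) / 2) * ‖u - x0‖ ^ 2) + ε)
    (hy0descent : f y0 ≤ f x0 + ⟪f' x0, y0 - x0⟫ + (η0 / 2) * ‖y0 - x0‖ ^ 2) :
    (f y0 + (σ / 2) * ‖y0 - x0‖ ^ 2) - (f xsσ + (σ / 2) * ‖xsσ - x0‖ ^ 2) ≤
      (η0 / 2) * ‖xsσ - x0‖ ^ 2 + ε := by
  have hlinear : f x0 + ⟪f' x0, xsσ - x0⟫ ≤ f xsσ :=
    hconv.add_inner_gradient_le (mem_univ _) (mem_univ _) (hgrad x0)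
  have hmodel := hy0m xsσ hxsσC
  linarith

/-- For `f` convex and differentiable, `f_σ(u) = f(u) + (σ/2)‖u - x₀‖²`
with minimizer `xsσ` over the nonempty closed convex set `C`, if `y₀ ∈ C` is an
`ε`-approximate minimizer over `C` of `m₀(u) = ⟪∇f(x₀), u - x₀⟫ + ((σ+η₀)/2)‖u - x₀‖²`
and satisfies the descent condition with estimate `η₀`, then the initial optimality gap
satisfies `f_σ(y₀) - f_σ(xsσ) ≤ (η₀/2)‖xsσ - x₀‖² + ε`. -/
theorem initial_gap_bound
    {n : ℕ} (C : Set (EuclideanSpace ℝ (Fin n)))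
    (hCne : C.Nonempty) (hCclosed : IsClosed C) (hCconvex : Convex ℝ C)
    (f : EuclideanSpace ℝ (Fin n) → ℝ) (f' : EuclideanSpace ℝ (Fin n) → EuclideanSpace ℝ (Fin n))
    (hgrad : ∀ x, HasGradientAt f (f' x) x)
    (hconv : ConvexOn ℝ Set.univ f)
    (x0 : EuclideanSpace ℝ (Fin n)) (hx0C : x0 ∈ C)
    (σ η0 ε : ℝ) (hσ : 0 < σ) (hη0 : 0 < η0) (hε : 0 ≤ ε)
    (xsσ : EuclideanSpace ℝ (Fin n)) (hxsσC : xsσ ∈ C)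
    (hxsσmin : ∀ u ∈ C,
      f xsσ + (σ / 2) * ‖xsσ - x0‖ ^ 2 ≤ f u + (σ / 2) * ‖u - x0‖ ^ 2)
    (y0 : EuclideanSpace ℝ (Fin n)) (hy0C : y0 ∈ C)
    (hy0m : ∀ u ∈ C,
      ⟪f' x0, y0 - x0⟫ + ((σ + η0) / 2) * ‖y0 - x0‖ ^ 2 ≤
        (⟪f' x0, u - x0⟫ + ((σ + η0) / 2) * ‖u - x0‖ ^ 2) + ε)
    (hy0descent : f y0 ≤ f x0 + ⟪f' x0, y0 - x0⟫ + (η0 / 2) * ‖y0 - x0‖ ^ 2) :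
    (f y0 + (σ / 2) * ‖y0 - x0‖ ^ 2) - (f xsσ + (σ / 2) * ‖xsσ - x0‖ ^ 2) ≤
      (η0 / 2) * ‖xsσ - x0‖ ^ 2 + ε :=
  initial_gap_bound_general C f f' hgrad hconv x0 σ η0 ε xsσ hxsσC y0 hy0m hy0descent
end

section
/- Let n ≥ 2, let Δⁿ = {x ∈ ℝⁿ : x_i ≥ 0 for all i, Σ_i x_i = 1} be the standard probability simplex with vertex set {e₁, …, eₙ} (the standard basis vectors), and let f(x) = (1/2)‖x‖², whose minimizer over Δⁿ is x* = (1/n, …, 1/n). Then the infimum, over all nonempty proper subsets S ⊊ {e₁, …, eₙ} and all x in the convex hull of S, of the strong Wolfe gap w(x, S) = max_{u ∈ S} ⟨x, u⟩ − min_{v ∈ Δⁿ} ⟨x, v⟩, equals 1/(n − 1). (Note ∇f(x) = x, and x* does not belong to the convex hull of any proper subset of the vertices.) -/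
/-!
If `x` lies in the convex hull of the vertices `eᵢ`, `i ∈ T`, with `T` a proper subset of the
coordinates, then `x` is a probability vector vanishing off `T`. Hence `⟪x, ·⟫` attains the
value `0` at a vertex outside `T`, so its minimum over the simplex is `0`, while some coordinate
`xᵢ = ⟪x, eᵢ⟫` with `i ∈ T` is at least `1 / |T| ≥ 1 / (n - 1)`. The barycenter of `n - 1`
vertices attains this bound.
-/

open Set
open scoped RealInnerProductSpace

variable {ι : Type*}

theorem centerMass_single_apply [DecidableEq ι] (T : Finset ι) (k : ι) :
    T.centerMass (fun _ => (1 : ℝ)) (EuclideanSpace.single · (1 : ℝ)) k =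
      if k ∈ T then (T.card : ℝ)⁻¹ else 0 := by
  simp [Finset.centerMass]

theorem image_single_ne_range [DecidableEq ι] {T : Set ι} {j : ι} (hj : j ∉ T) :
    (EuclideanSpace.single · (1 : ℝ)) '' T ≠ range (EuclideanSpace.single · (1 : ℝ)) := by
  intro h
  obtain ⟨k, hk, hkj⟩ : EuclideanSpace.single j (1 : ℝ) ∈ _ := h ▸ mem_range_self j
  have hkj' : k = j := by simpa [eq_comm] using congrArg (· j) hkj
  exact hj (hkj' ▸ hk)

variable [Fintype ι]

def probSimplex (ι : Type*) [Fintype ι] : Set (EuclideanSpace ℝ ι) :=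
  {p | (∀ i, 0 ≤ p i) ∧ ∑ i, p i = 1}

/-- `g` stands for the gradient `∇f(x)`; for `f = ½‖·‖²` it is `x` itself. -/
noncomputable def strongWolfeGap (g : EuclideanSpace ℝ ι) (S : Set (EuclideanSpace ℝ ι)) : ℝ :=
  sSup ((fun u => ⟪g, u⟫) '' S) - sInf ((fun v => ⟪g, v⟫) '' probSimplex ι)

theorem isLeast_inner_probSimplex {x : EuclideanSpace ℝ ι} (hx : ∀ i, 0 ≤ x i) {j : ι}
    (hj : x j = 0) : IsLeast ((fun v => ⟪x, v⟫) '' probSimplex ι) 0 := by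
  classical
  refine ⟨⟨EuclideanSpace.single j 1, ⟨fun i => ?_, by simp⟩,
    by simp [EuclideanSpace.inner_single_right, hj]⟩, ?_⟩
  · rw [PiLp.single_apply]
    split <;> norm_num
  · rintro _ ⟨p, ⟨hp, -⟩, rfl⟩
    simp only [PiLp.inner_apply, RCLike.inner_apply, conj_trivial]
    exact Finset.sum_nonneg fun i _ => mul_nonneg (hp i) (hx i)

variable [DecidableEq ι]

theorem convexHull_image_single_subset (T : Set ι) :
    convexHull ℝ ((EuclideanSpace.single · (1 : ℝ)) '' T) ⊆
      {x | x ∈ probSimplex ι ∧ ∀ j ∉ T, x j = 0} := by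
  refine convexHull_min ?_ ?_
  · rintro _ ⟨k, hk, rfl⟩
    refine ⟨⟨fun i => ?_, by simp⟩, fun j hj => ?_⟩
    · rw [PiLp.single_apply]
      split <;> norm_num
    · simp [show j ≠ k by rintro rfl; exact hj hk]
  · rintro y ⟨⟨hy, hy1⟩, hyT⟩ z ⟨⟨hz, hz1⟩, hzT⟩ a b ha hb hab
    simp only [mem_ofPred_eq, probSimplex, PiLp.add_apply, PiLp.smul_apply, smul_eq_mul]
    refine ⟨⟨fun i => by positivity [hy i, hz i], ?_⟩, fun j hj => by simp [hyT j hj, hzT j hj]⟩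
    rw [Finset.sum_add_distrib, ← Finset.mul_sum, ← Finset.mul_sum, hy1, hz1, mul_one, mul_one,
      hab]

theorem one_div_card_le_strongWolfeGap {T : Finset ι} (hT : T.Nonempty) {j : ι} (hj : j ∉ T)
    {x : EuclideanSpace ℝ ι}
    (hx : x ∈ convexHull ℝ ((EuclideanSpace.single · (1 : ℝ)) '' (T : Set ι))) :
    1 / (T.card : ℝ) ≤ strongWolfeGap x ((EuclideanSpace.single · (1 : ℝ)) '' (T : Set ι)) := by
  obtain ⟨⟨hx0, hx1⟩, hxT⟩ := convexHull_image_single_subset _ hx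
  rw [strongWolfeGap, (isLeast_inner_probSimplex hx0 (hxT j hj)).csInf_eq, sub_zero]
  have hsum : ∑ i ∈ T, x i = 1 :=
    (Finset.sum_subset T.subset_univ fun i _ hi => hxT i hi).trans hx1
  obtain ⟨i, hi, hxi⟩ := Finset.exists_le_of_sum_le hT (f := fun _ => 1 / (T.card : ℝ))
    (g := (x ·)) (by simp [hsum, hT.card_ne_zero])
  calc 1 / (T.card : ℝ) ≤ x i := hxi
    _ = ⟪x, EuclideanSpace.single i 1⟫ := by simp [EuclideanSpace.inner_single_right]
    _ ≤ _ := le_csSup ((T.finite_toSet.image _).image _).bddAbove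
        (mem_image_of_mem _ (mem_image_of_mem _ hi))

theorem strongWolfeGap_centerMass {T : Finset ι} (hT : T.Nonempty) {j : ι} (hj : j ∉ T) :
    strongWolfeGap (T.centerMass (fun _ => (1 : ℝ)) (EuclideanSpace.single · (1 : ℝ)))
      ((EuclideanSpace.single · (1 : ℝ)) '' (T : Set ι)) = 1 / (T.card : ℝ) := by
  set x := T.centerMass (fun _ => (1 : ℝ)) (EuclideanSpace.single · (1 : ℝ))
  have hx0 : ∀ k, 0 ≤ x k := fun k => by
    rw [centerMass_single_apply]
    split <;> positivity
  have hxj : x j = 0 := by rw [centerMass_single_apply, if_neg hj]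
  have hconst : (fun u => ⟪x, u⟫) '' ((EuclideanSpace.single · (1 : ℝ)) '' (T : Set ι)) =
      {(T.card : ℝ)⁻¹} := by
    rw [image_image, ← (Finset.coe_nonempty.mpr hT).image_const]
    refine image_congr fun k hk => ?_
    simp [EuclideanSpace.inner_single_right, x, centerMass_single_apply, Finset.mem_coe.mp hk]
  rw [strongWolfeGap, (isLeast_inner_probSimplex hx0 hxj).csInf_eq, hconst, csSup_singleton,
    sub_zero, one_div]

theorem one_div_card_sub_one_le_strongWolfeGap {S : Set (EuclideanSpace ℝ ι)}
    (hS : S ⊆ range (EuclideanSpace.single · (1 : ℝ))) (hne : S.Nonempty)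
    (hproper : S ≠ range (EuclideanSpace.single · (1 : ℝ))) {x : EuclideanSpace ℝ ι}
    (hx : x ∈ convexHull ℝ S) :
    1 / ((Fintype.card ι : ℝ) - 1) ≤ strongWolfeGap x S := by
  obtain ⟨t, rfl⟩ := subset_range_iff_exists_image_eq.mp hS
  obtain ⟨T, rfl⟩ := t.toFinite.exists_finset_coe
  have hT : T.Nonempty := Finset.coe_nonempty.mp (image_nonempty.mp hne)
  obtain ⟨j, hj⟩ : ∃ j, j ∉ T := by
    by_contra! h
    exact hproper (by rw [Finset.eq_univ_of_forall h, Finset.coe_univ, image_univ])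
  have hcard : (T.card : ℝ) ≤ Fintype.card ι - 1 := by
    rw [le_sub_iff_add_le]
    exact_mod_cast T.card_lt_univ_of_notMem hj
  calc 1 / ((Fintype.card ι : ℝ) - 1) ≤ 1 / (T.card : ℝ) :=
        one_div_le_one_div_of_le (by exact_mod_cast hT.card_pos) hcard
    _ ≤ _ := one_div_card_le_strongWolfeGap hT hj hx

theorem isLeast_strongWolfeGap (hι : 2 ≤ Fintype.card ι) :
    IsLeast {w : ℝ | ∃ S : Set (EuclideanSpace ℝ ι), ∃ x : EuclideanSpace ℝ ι,
        S.Nonempty ∧ S ⊆ range (EuclideanSpace.single · (1 : ℝ)) ∧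
        S ≠ range (EuclideanSpace.single · (1 : ℝ)) ∧ x ∈ convexHull ℝ S ∧
        w = strongWolfeGap x S}
      (1 / ((Fintype.card ι : ℝ) - 1)) := by
  refine ⟨?_, fun w ⟨S, x, hne, hS, hproper, hx, hw⟩ =>
    hw ▸ one_div_card_sub_one_le_strongWolfeGap hS hne hproper hx⟩
  obtain ⟨j⟩ : Nonempty ι := Fintype.card_pos_iff.mp (by omega)
  set T := Finset.univ.erase j
  have hcard : T.card = Fintype.card ι - 1 := by simp [T, Finset.card_erase_of_mem]
  have hT : T.Nonempty := Finset.card_pos.mp (by omega)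
  have hj : j ∉ T := Finset.notMem_erase j _
  refine ⟨(EuclideanSpace.single · (1 : ℝ)) '' (T : Set ι),
    T.centerMass (fun _ => (1 : ℝ)) (EuclideanSpace.single · (1 : ℝ)),
    (Finset.coe_nonempty.mpr hT).image _, image_subset_range _ _, image_single_ne_range hj,
    Finset.centerMass_mem_convexHull _ (fun _ _ => zero_le_one) (by simpa using hT.card_pos)
      fun i hi => mem_image_of_mem _ hi, ?_⟩
  rw [strongWolfeGap_centerMass hT hj, hcard, Nat.cast_sub (by omega), Nat.cast_one]

/-- **critical strong Wolfe gap on the simplex.** For `f(x) = ½‖x‖²` over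
the standard probability simplex `Δⁿ ⊆ ℝⁿ` (`n ≥ 2`), whose gradient is `∇f(x) = x` and
whose minimizer is `x* = (1/n, …, 1/n)`, the infimum over all nonempty proper subsets
`S` of the vertex set `{e₁, …, eₙ}` and all `x ∈ conv(S)` of the strong Wolfe gap
`w(x, S) = max_{u ∈ S} ⟪x, u⟫ - min_{v ∈ Δⁿ} ⟪x, v⟫` equals `1/(n - 1)`. -/
theorem critical_strong_wolfe_gap_simplex
    (n : ℕ) (hn : 2 ≤ n) :
    sInf {w : ℝ |
        ∃ S : Set (EuclideanSpace ℝ (Fin n)), ∃ x : EuclideanSpace ℝ (Fin n),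
          S.Nonempty ∧
          S ⊆ Set.range (fun i : Fin n => (EuclideanSpace.single i (1 : ℝ))) ∧
          S ≠ Set.range (fun i : Fin n => (EuclideanSpace.single i (1 : ℝ))) ∧
          x ∈ convexHull ℝ S ∧
          w = sSup ((fun u => ⟪x, u⟫) '' S) -
              sInf ((fun v => ⟪x, v⟫) ''
                {p : EuclideanSpace ℝ (Fin n) | (∀ i, 0 ≤ p i) ∧ ∑ i, p i = 1})} =
      1 / ((n : ℝ) - 1) := by
  have h := (isLeast_strongWolfeGap (ι := Fin n) (by rwa [Fintype.card_fin])).csInf_eq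
  rwa [Fintype.card_fin] at h
end
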